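/- arXiv:2303.04728 — 3 statements merged into one kernel-verified Lean document; each statement's English description precedes it below -/
import Mathlib

section
/- Let 1 ≤ q ≤ ∞ and n ∈ ℕ. The n-dimensional Lebesgue volume of the Lorentz unit ball is vol_n(B_{q,1}^n) = 2^n · ∏_{i=1}^n κ_q(i)^{-1}. -/
open MeasureTheory Finset
open scoped ENNReal NNReal

noncomputable section

/-- `sortedAbs x i` is the `i`-th largest value among `|x 0|, …, |x (n-1)|`
(`i = 0` gives the largest), i.e. the non-increasing rearrangement of `|x|`. -/
def sortedAbs {n : ℕ} (x : Fin n → ℝ) (i : Fin n) : ℝ :=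
  |x (Tuple.sort (fun j => |x j|) i.rev)|

/-- The weight `i ^ (1/q - 1)` appearing in the Lorentz `(q,1)`-norm, for `q ∈ [1,∞]`,
with the convention `1/∞ = 0` (so the weight is `i⁻¹` for `q = ∞`). -/
def lorentzWeight (q : ℝ≥0∞) (i : ℕ) : ℝ := (i : ℝ) ^ (1 / q.toReal - 1)

/-- The Lorentz norm `‖x‖_{q,1} = ∑_{i=1}^n i^{1/q-1} x_i^*`. -/
def lorentzNorm (q : ℝ≥0∞) {n : ℕ} (x : Fin n → ℝ) : ℝ :=
  ∑ i : Fin n, lorentzWeight q ((i : ℕ) + 1) * sortedAbs x i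

/-- The unit ball of the Lorentz space `ℓ_{q,1}^n`. -/
def lorentzBall (q : ℝ≥0∞) (n : ℕ) : Set (Fin n → ℝ) :=
  {x | lorentzNorm q x ≤ 1}

/-- `kappa q j = κ_q(j) = ∑_{i=1}^j i^{1/q-1}`. -/
def kappa (q : ℝ≥0∞) (j : ℕ) : ℝ := ∑ i ∈ Finset.range j, lorentzWeight q (i + 1)

section AuxLorentz
open Nat
open scoped Pointwise


def stdSimp (n : ℕ) : Set (Fin n → ℝ) := {z | (∀ i, 0 ≤ z i) ∧ ∑ i, z i ≤ 1}

lemma measurableSet_nonnegOrthant (n : ℕ) : MeasurableSet {z : Fin n → ℝ | ∀ i, 0 ≤ z i} := by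
  have : {z : Fin n → ℝ | ∀ i, 0 ≤ z i} = ⋂ i, {z | 0 ≤ z i} := by ext; simp
  rw [this]
  exact MeasurableSet.iInter fun i => measurableSet_le measurable_const (measurable_pi_apply i)

lemma measurableSet_stdSimp (n : ℕ) : MeasurableSet (stdSimp n) :=
  (measurableSet_nonnegOrthant n).inter
    (measurableSet_le (Finset.measurable_sum _ fun i _ => measurable_pi_apply i) measurable_const)

lemma volume_ker {n : ℕ} (f : (Fin n → ℝ) →ₗ[ℝ] ℝ) (hf : f ≠ 0) :
    volume {x : Fin n → ℝ | f x = 0} = 0 := by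
  have : {x : Fin n → ℝ | f x = 0} = (LinearMap.ker f : Set (Fin n → ℝ)) := rfl
  rw [this]
  exact Measure.addHaar_submodule _ _ (by simpa [LinearMap.ker_eq_top] using hf)

lemma stdSimp_smul {n : ℕ} {c : ℝ} (hc : 0 < c) :
    {z : Fin n → ℝ | (∀ i, 0 ≤ z i) ∧ ∑ i, z i ≤ c} = c • stdSimp n := by
  ext z
  simp only [Set.mem_smul_set, stdSimp, Set.mem_setOf_eq]
  constructor
  · intro ⟨h1, h2⟩
    refine ⟨c⁻¹ • z, ⟨fun i => ?_, ?_⟩, ?_⟩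
    · simp only [Pi.smul_apply, smul_eq_mul]
      have := h1 i; positivity
    · simp only [Pi.smul_apply, smul_eq_mul, ← Finset.mul_sum]
      rw [inv_mul_le_iff₀ hc, mul_one]
      exact h2
    · ext i
      simp only [Pi.smul_apply, smul_eq_mul, ← mul_assoc, mul_inv_cancel₀ hc.ne', one_mul]
  · rintro ⟨y, ⟨h1, h2⟩, rfl⟩
    refine ⟨fun i => by have := h1 i; simpa using mul_nonneg hc.le this, ?_⟩
    simp only [Pi.smul_apply, smul_eq_mul, ← Finset.mul_sum]
    calc c * ∑ i, y i ≤ c * 1 := by nlinarith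
    _ = c := mul_one c

lemma volume_scaled_simp {n : ℕ} {c : ℝ} (hc : 0 < c) :
    volume {z : Fin n → ℝ | (∀ i, 0 ≤ z i) ∧ ∑ i, z i ≤ c}
      = ENNReal.ofReal (c ^ n) * volume (stdSimp n) := by
  rw [stdSimp_smul hc, Measure.addHaar_smul]
  rw [Module.finrank_fin_fun]
  have h : |c ^ n| = c ^ n := abs_of_nonneg (pow_nonneg hc.le n)
  rw [h]

theorem volume_stdSimp (n : ℕ) : volume (stdSimp n) = ENNReal.ofReal (1 / (n ! : ℝ)) := by
  induction n with
  | zero =>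
    have : stdSimp 0 = Set.univ := by
      ext z; simp [stdSimp, Finset.univ_eq_empty]
    rw [this, MeasureTheory.volume_pi, Measure.pi_univ]
    simp
  | succ n ih =>
    set s : Set (ℝ × (Fin n → ℝ)) :=
      {p | 0 ≤ p.1 ∧ (∀ i, 0 ≤ p.2 i) ∧ p.1 + ∑ i, p.2 i ≤ 1} with hs_def
    have hs : MeasurableSet s := by
      have : s = (Prod.fst ⁻¹' {a : ℝ | 0 ≤ a}) ∩
          ((⋂ i, {p : ℝ × (Fin n → ℝ) | 0 ≤ p.2 i}) ∩
            {p : ℝ × (Fin n → ℝ) | p.1 + ∑ i, p.2 i ≤ 1}) := by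
        ext p; simp [hs_def, and_assoc]
      rw [this]
      refine (measurable_fst (measurableSet_le measurable_const measurable_id)).inter
        (MeasurableSet.inter ?_ ?_)
      · exact MeasurableSet.iInter fun i =>
          measurableSet_le measurable_const (measurable_snd.eval)
      · exact measurableSet_le (measurable_fst.add <|
          Finset.measurable_sum _ fun i _ => measurable_snd.eval) measurable_const
    have hfwd := MeasureTheory.volume_preserving_piFinSuccAbove (fun _ : Fin (n+1) => ℝ) 0
    have hpre : (MeasurableEquiv.piFinSuccAbove (fun _ : Fin (n+1) => ℝ) 0) ⁻¹' s
        = stdSimp (n+1) := by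
      ext x
      simp only [hs_def, Set.mem_preimage, MeasurableEquiv.piFinSuccAbove_apply, stdSimp,
        Set.mem_setOf_eq]
      constructor
      · rintro ⟨h0, h1, h2⟩
        refine ⟨?_, ?_⟩
        · intro i
          induction i using Fin.cases with
          | zero => exact h0
          | succ j => simpa [Fin.tail] using h1 j
        · rw [Fin.sum_univ_succ]
          simpa [Fin.tail] using h2
      · rintro ⟨h1, h2⟩
        refine ⟨h1 0, fun i => by simpa [Fin.tail] using h1 (Fin.succ i), ?_⟩
        rw [Fin.sum_univ_succ] at h2
        simpa [Fin.tail] using h2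
    have key : volume (stdSimp (n+1)) = (volume.prod volume) s := by
      rw [← hpre]
      exact hfwd.measure_preimage hs.nullMeasurableSet
    rw [key, Measure.prod_apply hs]
    have slice : ∀ a : ℝ, volume (Prod.mk a ⁻¹' s)
        = Set.indicator (Set.Icc (0:ℝ) 1) (fun a => ENNReal.ofReal ((1-a)^n / (n ! : ℝ))) a := by
      intro a
      have hset : Prod.mk a ⁻¹' s
          = {z : Fin n → ℝ | 0 ≤ a ∧ (∀ i, 0 ≤ z i) ∧ ∑ i, z i ≤ 1 - a} := by
        ext z
        simp only [hs_def, Set.mem_preimage, Set.mem_setOf_eq]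
        constructor
        · rintro ⟨h0, h1, h2⟩; exact ⟨h0, h1, by linarith⟩
        · rintro ⟨h0, h1, h2⟩; exact ⟨h0, h1, by linarith⟩
      rcases lt_or_ge a 0 with ha | ha
      · rw [hset, Set.indicator_of_notMem (by simp [ha.not_ge])]
        have : {z : Fin n → ℝ | 0 ≤ a ∧ (∀ i, 0 ≤ z i) ∧ ∑ i, z i ≤ 1 - a} = ∅ := by
          ext z; simp only [Set.mem_setOf_eq, Set.mem_empty_iff_false, iff_false]
          rintro ⟨h0, -, -⟩; exact absurd h0 ha.not_ge
        rw [this]; simp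
      rcases lt_or_ge (1:ℝ) a with ha1 | ha1
      · rw [hset, Set.indicator_of_notMem (by simp [ha1.not_ge])]
        have : {z : Fin n → ℝ | 0 ≤ a ∧ (∀ i, 0 ≤ z i) ∧ ∑ i, z i ≤ 1 - a} = ∅ := by
          ext z; simp only [Set.mem_setOf_eq, Set.mem_empty_iff_false, iff_false]
          rintro ⟨-, h1, h2⟩
          have : 0 ≤ ∑ i, z i := Finset.sum_nonneg fun i _ => h1 i
          linarith
        rw [this]; simp
      rw [Set.indicator_of_mem (Set.mem_Icc.2 ⟨ha, ha1⟩)]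
      rcases eq_or_lt_of_le ha1 with rfl | ha1'
      · -- a = 1 case
        have hsub : Prod.mk (1:ℝ) ⁻¹' s ⊆ {z : Fin n → ℝ | ∀ i, z i = 0} := by
          rw [hset]
          rintro z ⟨-, h1, h2⟩ i
          have hsum : ∑ j, z j ≤ 0 := by linarith
          have hle : z i ≤ ∑ j, z j :=
            Finset.single_le_sum (fun j _ => h1 j) (Finset.mem_univ i)
          exact le_antisymm (by linarith) (h1 i)
        rcases Nat.eq_zero_or_pos n with rfl | hn
        · have : Prod.mk (1:ℝ) ⁻¹' s = Set.univ := by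
            rw [hset]; ext z
            simp [Finset.univ_eq_empty, Subsingleton.elim z 0]
          rw [this, MeasureTheory.volume_pi, Measure.pi_univ]
          simp
        · have hker : volume {z : Fin n → ℝ | z ⟨0, hn⟩ = 0} = 0 := by
            apply volume_ker (LinearMap.proj ⟨0, hn⟩)
            intro h
            have := congrFun (congrArg (fun f => f.toFun) h) (fun _ => (1:ℝ))
            simpa using this
          have h0 : volume (Prod.mk (1:ℝ) ⁻¹' s) = 0 :=
            measure_mono_null (fun z hz => (hsub hz) ⟨0, hn⟩) hker
          rw [h0]
          rw [show (1:ℝ) - 1 = 0 by ring, zero_pow hn.ne']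
          simp
      · -- 0 ≤ a < 1
        rw [hset]
        have : {z : Fin n → ℝ | 0 ≤ a ∧ (∀ i, 0 ≤ z i) ∧ ∑ i, z i ≤ 1 - a}
            = {z : Fin n → ℝ | (∀ i, 0 ≤ z i) ∧ ∑ i, z i ≤ 1 - a} := by
          ext z; simp [ha]
        rw [this, volume_scaled_simp (by linarith : (0:ℝ) < 1 - a), ih,
          ← ENNReal.ofReal_mul (pow_nonneg (by linarith) n)]
        congr 1
        ring
    rw [lintegral_congr slice]
    rw [lintegral_indicator measurableSet_Icc]
    rw [← ofReal_integral_eq_lintegral_ofReal]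
    · rw [MeasureTheory.integral_Icc_eq_integral_Ioc,
        ← intervalIntegral.integral_of_le (zero_le_one)]
      have : ∫ x in (0:ℝ)..1, (1-x)^n / (n ! : ℝ)
          = (∫ x in (0:ℝ)..1, (1-x)^n) / (n ! : ℝ) := intervalIntegral.integral_div _ _
      rw [this, intervalIntegral.integral_comp_sub_left (fun x => x ^ n) 1]
      norm_num [integral_pow]
      rw [Nat.factorial_succ]
      push_cast
      rw [div_eq_mul_inv, ← mul_inv]
    · apply Continuous.integrableOn_Icc
      continuity
    · refine (ae_restrict_iff' measurableSet_Icc).2 (ae_of_all _ fun a ha => ?_)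
      have : (0:ℝ) ≤ 1 - a := by linarith [ha.2]
      positivity

lemma sortedAbs_eq {n : ℕ} (x : Fin n → ℝ) (i : Fin n) :
    sortedAbs x i = ((fun j => |x j|) ∘ (Tuple.sort (fun j => |x j|))) i.rev := rfl

/-- sortedAbs only depends on the absolute values. -/
lemma sortedAbs_congr {n : ℕ} {x y : Fin n → ℝ} (h : (fun j => |x j|) = fun j => |y j|) :
    sortedAbs x = sortedAbs y := by
  funext i
  rw [sortedAbs_eq, sortedAbs_eq, h]

lemma sortedAbs_comp_perm {n : ℕ} (x : Fin n → ℝ) (σ : Equiv.Perm (Fin n)) :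
    sortedAbs (fun i => x (σ i)) = sortedAbs x := by
  funext i
  rw [sortedAbs_eq, sortedAbs_eq]
  have h1 : (fun j => |x (σ j)|) = (fun j => |x j|) ∘ ⇑σ := rfl
  rw [h1, Tuple.comp_perm_comp_sort_eq_comp_sort]

/-- If `|x| ∘ σ` is antitone then `sortedAbs x = |x| ∘ σ`. -/
lemma sortedAbs_eq_of_antitone {n : ℕ} {x : Fin n → ℝ} {σ : Equiv.Perm (Fin n)}
    (h : Antitone fun i => |x (σ i)|) : sortedAbs x = fun i => |x (σ i)| := by
  set f : Fin n → ℝ := fun j => |x j| with hf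
  have hmono : Monotone (f ∘ ⇑(Fin.revPerm.trans σ)) := by
    intro i j hij
    exact h (Fin.rev_le_rev.2 hij)
  have key : f ∘ ⇑(Tuple.sort f) = f ∘ ⇑(Fin.revPerm.trans σ) :=
    Tuple.unique_monotone (Tuple.monotone_sort f) hmono
  funext i
  rw [sortedAbs_eq]
  have := congrFun key i.rev
  simp only [Function.comp_apply, Equiv.trans_apply, Fin.revPerm_apply, Fin.rev_rev] at this ⊢
  exact this

lemma lorentzNorm_eq_of_antitone {n : ℕ} (q : ℝ≥0∞) {x : Fin n → ℝ} {σ : Equiv.Perm (Fin n)}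
    (h : Antitone fun i => |x (σ i)|) :
    lorentzNorm q x = ∑ i : Fin n, lorentzWeight q ((i : ℕ) + 1) * |x (σ i)| := by
  unfold lorentzNorm
  rw [sortedAbs_eq_of_antitone h]

lemma lorentzNorm_eq_of_antitone' {n : ℕ} (q : ℝ≥0∞) {x : Fin n → ℝ}
    (h : Antitone fun i => |x i|) :
    lorentzNorm q x = ∑ i : Fin n, lorentzWeight q ((i : ℕ) + 1) * |x i| :=
  lorentzNorm_eq_of_antitone q (σ := 1) h

def bsgn (b : Bool) : ℝ := if b then 1 else -1

lemma abs_bsgn_mul (b : Bool) (t : ℝ) : |bsgn b * t| = |t| := by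
  cases b <;> simp [bsgn]

lemma bsgn_mul_self (b : Bool) : bsgn b * bsgn b = 1 := by cases b <;> simp [bsgn]

def spMatrix {n : ℕ} (σ : Equiv.Perm (Fin n)) (ε : Fin n → Bool) : Matrix (Fin n) (Fin n) ℝ :=
  Matrix.diagonal (fun j => bsgn (ε j)) * Equiv.Perm.permMatrix ℝ σ.symm

def signedPerm {n : ℕ} (σ : Equiv.Perm (Fin n)) (ε : Fin n → Bool) :
    (Fin n → ℝ) → (Fin n → ℝ) :=
  fun y j => bsgn (ε j) * y (σ.symm j)

lemma signedPerm_apply_eq {n : ℕ} (σ : Equiv.Perm (Fin n)) (ε : Fin n → Bool) :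
    signedPerm σ ε = ⇑(Matrix.toLin' (spMatrix σ ε)) := by
  funext y j
  rw [Matrix.toLin'_apply]
  unfold signedPerm spMatrix
  have hentry : ∀ k, (Matrix.diagonal (fun j => bsgn (ε j)) * Equiv.Perm.permMatrix ℝ σ.symm) j k
      = bsgn (ε j) * (if σ.symm j = k then 1 else 0) := by
    intro k
    rw [Matrix.diagonal_mul]
    congr 1
    simp [Equiv.Perm.permMatrix, PEquiv.toMatrix, Equiv.toPEquiv]
  rw [show (Matrix.diagonal (fun j => bsgn (ε j)) * Equiv.Perm.permMatrix ℝ σ.symm).mulVec y j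
    = ∑ k, (Matrix.diagonal (fun j => bsgn (ε j)) * Equiv.Perm.permMatrix ℝ σ.symm) j k * y k from by
      rw [Matrix.mulVec]; rfl]
  simp only [hentry, mul_assoc, ite_mul, one_mul, zero_mul, mul_ite, mul_zero]
  rw [Finset.sum_ite_eq Finset.univ (σ.symm j) (fun k => bsgn (ε j) * y k)]
  simp

lemma volume_preimage_signedPerm {n : ℕ} (σ : Equiv.Perm (Fin n)) (ε : Fin n → Bool)
    (s : Set (Fin n → ℝ)) : volume (signedPerm σ ε ⁻¹' s) = volume s := by
  have hdet : |LinearMap.det (Matrix.toLin' (spMatrix σ ε))| = 1 := by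
    rw [LinearMap.det_toLin', spMatrix, Matrix.det_mul, Matrix.det_diagonal,
      Matrix.det_permutation σ.symm]
    rw [abs_mul]
    have h1 : |∏ i, bsgn (ε i)| = 1 := by
      rw [Finset.abs_prod]
      rw [Finset.prod_eq_one]
      intro i _
      cases (ε i) <;> simp [bsgn]
    have h2 : |((Equiv.Perm.sign σ.symm : ℤ) : ℝ)| = 1 := by
      rcases Int.units_eq_one_or (Equiv.Perm.sign σ.symm) with h | h <;> simp [h]
    rw [h1, h2, mul_one]
  have hdet0 : LinearMap.det (Matrix.toLin' (spMatrix σ ε)) ≠ 0 := by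
    intro h; rw [h] at hdet; simp at hdet
  rw [signedPerm_apply_eq, Measure.addHaar_preimage_linearMap volume hdet0 s]
  rw [abs_inv, hdet]
  simp

/-! ### Cones indexed by signed permutations -/

def cone {n : ℕ} (σ : Equiv.Perm (Fin n)) (ε : Fin n → Bool) : Set (Fin n → ℝ) :=
  {x | (StrictAnti fun i => |x (σ i)|) ∧ ∀ i, 0 < bsgn (ε i) * x i}

lemma preimage_cone {n : ℕ} (σ : Equiv.Perm (Fin n)) (ε : Fin n → Bool) :
    signedPerm σ ε ⁻¹' (cone σ ε) = cone 1 (fun _ => true) := by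
  ext y
  simp only [cone, Set.mem_preimage, Set.mem_setOf_eq, signedPerm]
  constructor
  · rintro ⟨h1, h2⟩
    constructor
    · intro i j hij
      have := h1 hij
      simpa [abs_bsgn_mul, Equiv.Perm.one_apply, -abs_mul] using this
    · intro i
      have := h2 (σ i)
      rw [← mul_assoc, bsgn_mul_self, one_mul, Equiv.symm_apply_apply] at this
      simpa [bsgn] using this
  · rintro ⟨h1, h2⟩
    constructor
    · intro i j hij
      have := h1 hij
      simpa [abs_bsgn_mul, Equiv.Perm.one_apply, -abs_mul] using this
    · intro i
      rw [← mul_assoc, bsgn_mul_self, one_mul]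
      simpa [bsgn] using h2 (σ.symm i)

lemma preimage_lorentzBall {n : ℕ} (q : ℝ≥0∞) (σ : Equiv.Perm (Fin n)) (ε : Fin n → Bool) :
    signedPerm σ ε ⁻¹' (lorentzBall q n) = lorentzBall q n := by
  ext y
  simp only [lorentzBall, Set.mem_preimage, Set.mem_setOf_eq]
  have : lorentzNorm q (signedPerm σ ε y) = lorentzNorm q y := by
    unfold lorentzNorm
    have h1 : sortedAbs (signedPerm σ ε y) = sortedAbs (fun j => y (σ.symm j)) :=
      sortedAbs_congr (by funext j; exact abs_bsgn_mul (ε j) (y (σ.symm j)))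
    rw [h1, sortedAbs_comp_perm y σ.symm]
  rw [this]

/-- The set of "bad" points: some coordinate vanishes or two have same abs value. -/
def badSet (n : ℕ) : Set (Fin n → ℝ) :=
  {x | (∃ i, x i = 0) ∨ ∃ i j, i ≠ j ∧ |x i| = |x j|}

lemma volume_badSet (n : ℕ) : volume (badSet n) = 0 := by
  have h1 : badSet n ⊆ (⋃ i, {x : Fin n → ℝ | x i = 0}) ∪
      ⋃ (i) (j), if i = j then (∅ : Set (Fin n → ℝ))
        else {x | x i - x j = 0} ∪ {x | x i + x j = 0} := by
    rintro x (⟨i, hi⟩ | ⟨i, j, hij, habs⟩)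
    · exact Or.inl (Set.mem_iUnion.2 ⟨i, hi⟩)
    · refine Or.inr (Set.mem_iUnion.2 ⟨i, Set.mem_iUnion.2 ⟨j, ?_⟩⟩)
      rw [if_neg hij]
      rcases abs_eq_abs.1 habs with h | h
      · exact Or.inl (by simp [h])
      · exact Or.inr (by simp [h])
  refine measure_mono_null h1 (measure_union_null ?_ ?_)
  · refine measure_iUnion_null fun i => ?_
    have heq : {x : Fin n → ℝ | x i = 0}
        = {x | (LinearMap.proj i : (Fin n → ℝ) →ₗ[ℝ] ℝ) x = 0} := by ext x; simp
    rw [heq]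
    refine volume_ker _ ?_
    intro h
    have := LinearMap.congr_fun h (fun _ => (1:ℝ))
    simpa using this
  · refine measure_iUnion_null fun i => measure_iUnion_null fun j => ?_
    by_cases hij : i = j
    · simp [hij]
    · rw [if_neg hij]
      refine measure_union_null ?_ ?_
      · have heq : {x : Fin n → ℝ | x i - x j = 0}
            = {x | ((LinearMap.proj i : (Fin n → ℝ) →ₗ[ℝ] ℝ) - (LinearMap.proj j : (Fin n → ℝ) →ₗ[ℝ] ℝ)) x = 0} := by
          ext x; simp
        rw [heq]
        refine volume_ker _ ?_
        intro h
        have := LinearMap.congr_fun h (fun k => if k = i then (1:ℝ) else 0)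
        simpa [hij, Ne.symm hij] using this
      · have heq : {x : Fin n → ℝ | x i + x j = 0}
            = {x | ((LinearMap.proj i : (Fin n → ℝ) →ₗ[ℝ] ℝ) + (LinearMap.proj j : (Fin n → ℝ) →ₗ[ℝ] ℝ)) x = 0} := by
          ext x; simp
        rw [heq]
        refine volume_ker _ ?_
        intro h
        have := LinearMap.congr_fun h (fun k => if k = i then (1:ℝ) else 0)
        simpa [hij, Ne.symm hij] using this

lemma exists_cone_mem {n : ℕ} {x : Fin n → ℝ} (hx : x ∉ badSet n) :
    ∃ σ ε, x ∈ cone σ ε := by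
  simp only [badSet, Set.mem_setOf_eq, not_or, not_exists] at hx
  obtain ⟨hx0, hxab⟩ := hx
  have habs_inj : Function.Injective fun i => |x i| := by
    intro i j h
    by_contra hij
    exact (hxab i) j ⟨hij, h⟩
  refine ⟨Fin.revPerm.trans (Tuple.sort fun j => |x j|), fun i => decide (0 < x i), ?_, ?_⟩
  · intro i j hij
    have hmono := Tuple.monotone_sort (fun j => |x j|)
    have hle : |x ((Fin.revPerm.trans (Tuple.sort fun j => |x j|)) j)|
        ≤ |x ((Fin.revPerm.trans (Tuple.sort fun j => |x j|)) i)| := by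
      simp only [Equiv.trans_apply, Fin.revPerm_apply]
      exact hmono (Fin.rev_le_rev.2 hij.le)
    rcases lt_or_eq_of_le hle with h | h
    · exact h
    · exfalso
      have h2 := habs_inj h
      have h3 := (Fin.revPerm.trans (Tuple.sort fun j => |x j|)).injective h2
      exact absurd h3.symm hij.ne
  · intro i
    show 0 < bsgn (decide (0 < x i)) * x i
    have hbt : bsgn true = 1 := rfl
    have hbf : bsgn false = -1 := rfl
    rcases lt_trichotomy (x i) 0 with h | h | h
    · rw [decide_eq_false (by linarith : ¬ 0 < x i), hbf]
      linarith
    · exact absurd h (hx0 i)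
    · rw [decide_eq_true h, hbt]
      linarith

lemma cone_disjoint {n : ℕ} :
    Pairwise fun (g g' : Equiv.Perm (Fin n) × (Fin n → Bool)) =>
      Disjoint (cone g.1 g.2) (cone g'.1 g'.2) := by
  rintro ⟨σ, ε⟩ ⟨σ', ε'⟩ hne
  rw [Set.disjoint_left]
  rintro x ⟨h1, h2⟩ ⟨h1', h2'⟩
  dsimp only at h1 h2 h1' h2'
  apply hne
  have habs_inj : Function.Injective fun i => |x i| := by
    intro a b hab
    have hab' : |x (σ (σ.symm a))| = |x (σ (σ.symm b))| := by simpa using hab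
    have := h1.injective hab'
    simpa using congrArg σ this
  have hσ : σ = σ' := by
    have hm1 : Monotone ((fun i => |x i|) ∘ ⇑(Fin.revPerm.trans σ)) := by
      intro i j hij
      exact (h1.antitone) (Fin.rev_le_rev.2 hij)
    have hm2 : Monotone ((fun i => |x i|) ∘ ⇑(Fin.revPerm.trans σ')) := by
      intro i j hij
      exact (h1'.antitone) (Fin.rev_le_rev.2 hij)
    have hmeq := Tuple.unique_monotone hm1 hm2
    refine Equiv.ext fun i => ?_
    have hi := congrFun hmeq i.rev
    simp only [Function.comp_apply, Equiv.trans_apply, Fin.revPerm_apply, Fin.rev_rev] at hi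
    exact habs_inj hi
  have hε : ε = ε' := by
    funext i
    have a1 := h2 i
    have a2 := h2' i
    have hbt : bsgn true = 1 := rfl
    have hbf : bsgn false = -1 := rfl
    have key : ∀ b : Bool, 0 < bsgn b * x i → b = decide (0 < x i) := by
      intro b hb
      cases b
      · rw [hbf] at hb
        rw [decide_eq_false (by linarith : ¬ 0 < x i)]
      · rw [hbt] at hb
        rw [decide_eq_true (by linarith : 0 < x i)]
    rw [key _ a1, key _ a2]
  rw [hσ, hε]



lemma measurableSet_cone {n : ℕ} (σ : Equiv.Perm (Fin n)) (ε : Fin n → Bool) :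
    MeasurableSet (cone σ ε) := by
  have hrw : cone σ ε = (⋂ (i : Fin n), ⋂ (j : Fin n),
      {x : Fin n → ℝ | i < j → |x (σ j)| < |x (σ i)|}) ∩
      ⋂ (i : Fin n), {x : Fin n → ℝ | 0 < bsgn (ε i) * x i} := by
    ext x
    simp only [cone, Set.mem_setOf_eq, Set.mem_inter_iff, Set.mem_iInter, StrictAnti]
  rw [hrw]
  refine MeasurableSet.inter ?_ ?_
  · refine MeasurableSet.iInter fun i => MeasurableSet.iInter fun j => ?_
    by_cases hij : i < j
    · have : {x : Fin n → ℝ | i < j → |x (σ j)| < |x (σ i)|}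
          = {x : Fin n → ℝ | |x (σ j)| < |x (σ i)|} := by
        ext x; simp [hij]
      rw [this]
      exact measurableSet_lt (measurable_pi_apply (σ j)).abs (measurable_pi_apply (σ i)).abs
    · have : {x : Fin n → ℝ | i < j → |x (σ j)| < |x (σ i)|} = Set.univ := by
        ext x; simp [hij]
      rw [this]; exact MeasurableSet.univ
  · exact MeasurableSet.iInter fun i =>
      measurableSet_lt measurable_const (measurable_const.mul (measurable_pi_apply i))

lemma ball_inter_cone {n : ℕ} (q : ℝ≥0∞) (σ : Equiv.Perm (Fin n)) (ε : Fin n → Bool) :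
    lorentzBall q n ∩ cone σ ε
      = {x : Fin n → ℝ | ∑ i : Fin n, lorentzWeight q ((i : ℕ) + 1) * |x (σ i)| ≤ 1}
        ∩ cone σ ε := by
  ext x
  simp only [Set.mem_inter_iff, lorentzBall, Set.mem_setOf_eq, and_congr_left_iff]
  intro hc
  rw [lorentzNorm_eq_of_antitone q (hc.1.antitone)]

lemma measurableSet_ball_inter_cone {n : ℕ} (q : ℝ≥0∞) (σ : Equiv.Perm (Fin n))
    (ε : Fin n → Bool) : MeasurableSet (lorentzBall q n ∩ cone σ ε) := by
  rw [ball_inter_cone]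
  refine MeasurableSet.inter ?_ (measurableSet_cone σ ε)
  exact measurableSet_le (Finset.measurable_sum _ fun i _ =>
    measurable_const.mul (measurable_pi_apply (σ i)).abs) measurable_const

lemma volume_ball_decomp {n : ℕ} (q : ℝ≥0∞) :
    volume (lorentzBall q n)
      = (n ! * 2 ^ n : ℕ) * volume (lorentzBall q n ∩ cone 1 (fun _ => true)) := by
  classical
  set f : Equiv.Perm (Fin n) × (Fin n → Bool) → Set (Fin n → ℝ) :=
    fun g => lorentzBall q n ∩ cone g.1 g.2 with hf
  have hterm : ∀ g, volume (f g) = volume (lorentzBall q n ∩ cone 1 (fun _ => true)) := by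
    rintro ⟨σ, ε⟩
    have h := volume_preimage_signedPerm σ ε (lorentzBall q n ∩ cone σ ε)
    rw [Set.preimage_inter, preimage_lorentzBall, preimage_cone] at h
    exact h.symm
  have hdisj : Pairwise (Function.onFun Disjoint f) := by
    intro g g' hne
    exact Set.disjoint_of_subset Set.inter_subset_right Set.inter_subset_right
      (cone_disjoint hne)
  have hmeas : ∀ g, MeasurableSet (f g) := fun g => measurableSet_ball_inter_cone q g.1 g.2
  have hU : volume (⋃ g, f g) = ∑ g, volume (f g) := by
    rw [measure_iUnion hdisj hmeas, tsum_fintype]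
  have hBU : volume (lorentzBall q n) = volume (⋃ g, f g) := by
    refine le_antisymm ?_ (measure_mono (Set.iUnion_subset fun g => Set.inter_subset_left))
    have hsub : lorentzBall q n ⊆ (⋃ g, f g) ∪ badSet n := by
      intro x hx
      by_cases hb : x ∈ badSet n
      · exact Or.inr hb
      · obtain ⟨σ, ε, hc⟩ := exists_cone_mem hb
        exact Or.inl (Set.mem_iUnion.2 ⟨⟨σ, ε⟩, hx, hc⟩)
    calc volume (lorentzBall q n) ≤ volume ((⋃ g, f g) ∪ badSet n) := measure_mono hsub
      _ ≤ volume (⋃ g, f g) + volume (badSet n) := measure_union_le _ _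
      _ = volume (⋃ g, f g) := by rw [volume_badSet, add_zero]
  rw [hBU, hU]
  rw [Finset.sum_congr rfl (fun g _ => hterm g), Finset.sum_const]
  rw [Finset.card_univ]
  have hcard : Fintype.card (Equiv.Perm (Fin n) × (Fin n → Bool)) = n ! * 2 ^ n := by
    rw [Fintype.card_prod, Fintype.card_perm, Fintype.card_fun]
    simp
  rw [hcard, nsmul_eq_mul]


/-! ### From the ordered cone to simplices -/

lemma lorentzWeight_pos (q : ℝ≥0∞) (i : ℕ) : 0 < lorentzWeight q (i + 1) := by
  unfold lorentzWeight
  apply Real.rpow_pos_of_pos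
  positivity

lemma kappa_pos (q : ℝ≥0∞) (j : ℕ) : 0 < kappa q (j + 1) := by
  unfold kappa
  apply Finset.sum_pos (fun i _ => lorentzWeight_pos q i)
  exact Finset.nonempty_range_add_one

lemma kappa_zero (q : ℝ≥0∞) : kappa q 0 = 0 := by simp [kappa]

lemma kappa_succ (q : ℝ≥0∞) (m : ℕ) :
    kappa q (m + 1) = kappa q m + lorentzWeight q (m + 1) := Finset.sum_range_succ _ m

/-- The ordered weighted simplex. -/
def ordSimp (q : ℝ≥0∞) (n : ℕ) : Set (Fin n → ℝ) :=
  {y | Antitone y ∧ (∀ i, 0 ≤ y i) ∧ ∑ i : Fin n, lorentzWeight q ((i : ℕ) + 1) * y i ≤ 1}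

/-- The weighted simplex. -/
def wSimp (q : ℝ≥0∞) (n : ℕ) : Set (Fin n → ℝ) :=
  {z | (∀ i, 0 ≤ z i) ∧ ∑ i : Fin n, kappa q ((i : ℕ) + 1) * z i ≤ 1}

lemma volume_ball_inter_cone0 {n : ℕ} (q : ℝ≥0∞) :
    volume (lorentzBall q n ∩ cone 1 (fun _ => true)) = volume (ordSimp q n) := by
  have hbt : bsgn true = 1 := rfl
  have hsub1 : lorentzBall q n ∩ cone 1 (fun _ => true) ⊆ ordSimp q n := by
    rintro x ⟨hB, h1, h2⟩
    have hpos : ∀ i, 0 < x i := by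
      intro i; have := h2 i; rw [hbt, one_mul] at this; exact this
    have habs : ∀ i, |x i| = x i := fun i => abs_of_pos (hpos i)
    have hanti : Antitone x := by
      intro i j hij
      rcases eq_or_lt_of_le hij with rfl | hlt
      · exact le_refl _
      · have hle := (h1 hlt).le
        simp only [Equiv.Perm.one_apply, habs] at hle
        exact hle
    refine ⟨hanti, fun i => (hpos i).le, ?_⟩
    have habs_anti : Antitone fun i => |x i| := by
      intro i j hij; simp only [habs]; exact hanti hij
    have hB' : lorentzNorm q x ≤ 1 := hB
    rw [lorentzNorm_eq_of_antitone' q habs_anti] at hB'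
    calc ∑ i : Fin n, lorentzWeight q ((i : ℕ) + 1) * x i
        = ∑ i : Fin n, lorentzWeight q ((i : ℕ) + 1) * |x i| := by
          refine Finset.sum_congr rfl fun i _ => by rw [habs]
      _ ≤ 1 := hB'
  have hsub2 : ordSimp q n ⊆ (lorentzBall q n ∩ cone 1 (fun _ => true)) ∪ badSet n := by
    rintro y ⟨hanti, hnn, hsum⟩
    have habs : ∀ i, |y i| = y i := fun i => abs_of_nonneg (hnn i)
    have habs_anti : Antitone fun i => |y i| := by
      intro i j hij; simp only [habs]; exact hanti hij
    have hB : y ∈ lorentzBall q n := by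
      show lorentzNorm q y ≤ 1
      rw [lorentzNorm_eq_of_antitone' q habs_anti]
      calc ∑ i : Fin n, lorentzWeight q ((i : ℕ) + 1) * |y i|
          = ∑ i : Fin n, lorentzWeight q ((i : ℕ) + 1) * y i := by
            refine Finset.sum_congr rfl fun i _ => by rw [habs]
        _ ≤ 1 := hsum
    by_cases hbad : y ∈ badSet n
    · exact Or.inr hbad
    · simp only [badSet, Set.mem_setOf_eq, not_or, not_exists] at hbad
      obtain ⟨h0, hab⟩ := hbad
      have hc : y ∈ cone (1 : Equiv.Perm (Fin n)) (fun _ => true) := by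
        refine ⟨?_, ?_⟩
        · intro i j hij
          simp only [Equiv.Perm.one_apply]
          have hle : |y j| ≤ |y i| := habs_anti hij.le
          rcases eq_or_lt_of_le hle with h | h
          · exact (hab j i ⟨hij.ne', h⟩).elim
          · exact h
        · intro i
          rw [hbt, one_mul]
          rcases eq_or_lt_of_le (hnn i) with h | h
          · exact absurd h.symm (h0 i)
          · exact h
      exact Or.inl ⟨hB, hc⟩
  refine le_antisymm (measure_mono hsub1) ?_
  calc volume (ordSimp q n)
      ≤ volume ((lorentzBall q n ∩ cone 1 (fun _ => true)) ∪ badSet n) := measure_mono hsub2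
    _ ≤ volume (lorentzBall q n ∩ cone 1 (fun _ => true)) + volume (badSet n) :=
        measure_union_le _ _
    _ = volume (lorentzBall q n ∩ cone 1 (fun _ => true)) := by rw [volume_badSet, add_zero]

/-- extension of a tuple by zero -/
def Yext {n : ℕ} (y : Fin n → ℝ) (m : ℕ) : ℝ := if h : m < n then y ⟨m, h⟩ else 0

lemma antitone_of_adjacent {n : ℕ} {y : Fin n → ℝ}
    (h : ∀ (m : ℕ) (hm : m + 1 < n), y ⟨m + 1, hm⟩ ≤ y ⟨m, by omega⟩) : Antitone y := by
  have key : ∀ (k : ℕ) (i j : Fin n), (j : ℕ) = (i : ℕ) + k → y j ≤ y i := by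
    intro k
    induction k with
    | zero =>
      intro i j hij
      have : j = i := Fin.ext (by omega)
      rw [this]
    | succ m ihm =>
      intro i j hij
      have hm : (i : ℕ) + m + 1 < n := by omega
      have h1 : y j ≤ y ⟨(i : ℕ) + m, by omega⟩ := by
        have hadj := h ((i : ℕ) + m) hm
        have hj : j = ⟨(i : ℕ) + m + 1, hm⟩ := Fin.ext (by simp only [Fin.val_mk]; omega)
        have hyj : y j = y ⟨(i : ℕ) + m + 1, hm⟩ := congrArg y hj
        rw [hyj]
        exact hadj
      exact le_trans h1 (ihm i ⟨(i : ℕ) + m, by omega⟩ rfl)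
  intro i j hij
  exact key ((j : ℕ) - (i : ℕ)) i j (by omega)

lemma abel_shift (q : ℝ≥0∞) {n : ℕ} (y : Fin n → ℝ) :
    ∑ i : Fin n, kappa q ((i : ℕ) + 1) * Yext y ((i : ℕ) + 1)
      = ∑ i : Fin n, kappa q (i : ℕ) * y i := by
  have h1 : ∑ i : Fin n, kappa q ((i : ℕ) + 1) * Yext y ((i : ℕ) + 1)
      = ∑ i ∈ Finset.range n, kappa q (i + 1) * Yext y (i + 1) :=
    Fin.sum_univ_eq_sum_range (fun m => kappa q (m + 1) * Yext y (m + 1)) n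
  have h2 : ∑ i : Fin n, kappa q (i : ℕ) * y i
      = ∑ i ∈ Finset.range n, kappa q i * Yext y i := by
    rw [← Fin.sum_univ_eq_sum_range (fun m => kappa q m * Yext y m) n]
    refine Finset.sum_congr rfl fun i _ => ?_
    congr 1
    unfold Yext
    rw [dif_pos i.isLt]
  rw [h1, h2]
  cases n with
  | zero => simp
  | succ m =>
    rw [Finset.sum_range_succ, Finset.sum_range_succ']
    have hz1 : Yext (n := m + 1) y (m + 1) = 0 := by
      unfold Yext; rw [dif_neg (lt_irrefl (m + 1))]
    have hz2 : kappa q 0 * Yext (n := m + 1) y 0 = 0 := by rw [kappa_zero, zero_mul]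
    rw [hz1, hz2, mul_zero, add_zero]

lemma abel_identity (q : ℝ≥0∞) {n : ℕ} (y : Fin n → ℝ) :
    ∑ i : Fin n, kappa q ((i : ℕ) + 1) * (y i - Yext y ((i : ℕ) + 1))
      = ∑ i : Fin n, lorentzWeight q ((i : ℕ) + 1) * y i := by
  have h1 : ∑ i : Fin n, kappa q ((i : ℕ) + 1) * (y i - Yext y ((i : ℕ) + 1))
      = ∑ i : Fin n, kappa q ((i : ℕ) + 1) * y i
        - ∑ i : Fin n, kappa q ((i : ℕ) + 1) * Yext y ((i : ℕ) + 1) := by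
    rw [← Finset.sum_sub_distrib]
    exact Finset.sum_congr rfl fun i _ => by ring
  rw [h1, abel_shift, ← Finset.sum_sub_distrib]
  refine Finset.sum_congr rfl fun i _ => ?_
  rw [kappa_succ]
  ring

/-- The difference matrix. -/
def diffMat (n : ℕ) : Matrix (Fin n) (Fin n) ℝ :=
  fun i j => if j = i then 1 else if (j : ℕ) = (i : ℕ) + 1 then -1 else 0

lemma diffMat_mulVec {n : ℕ} (y : Fin n → ℝ) (i : Fin n) :
    (diffMat n).mulVec y i = y i - Yext y ((i : ℕ) + 1) := by
  have hsplit : ∀ j : Fin n, diffMat n i j * y j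
      = (if j = i then y j else 0) + (if (j : ℕ) = (i : ℕ) + 1 then -y j else 0) := by
    intro j
    unfold diffMat
    by_cases h1 : j = i
    · subst h1
      rw [if_pos rfl, if_pos rfl, if_neg (Nat.ne_of_lt (Nat.lt_succ_self (j : ℕ))), one_mul,
        add_zero]
    · rw [if_neg h1]
      by_cases h2 : (j : ℕ) = (i : ℕ) + 1
      · rw [if_pos h2, if_neg h1, if_pos h2]; ring
      · rw [if_neg h2, if_neg h1, if_neg h2]; ring
  rw [show (diffMat n).mulVec y i = ∑ j, diffMat n i j * y j from by rw [Matrix.mulVec]; rfl]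
  rw [Finset.sum_congr rfl fun j _ => hsplit j, Finset.sum_add_distrib]
  rw [Finset.sum_ite_eq' Finset.univ i (fun j => y j), if_pos (Finset.mem_univ i)]
  congr 1
  by_cases hn : (i : ℕ) + 1 < n
  · have : Yext y ((i : ℕ) + 1) = y ⟨(i : ℕ) + 1, hn⟩ := by unfold Yext; rw [dif_pos hn]
    rw [this]
    rw [Finset.sum_eq_single (⟨(i : ℕ) + 1, hn⟩ : Fin n)]
    · rw [if_pos rfl]
    · intro j _ hj
      rw [if_neg (fun hc => hj (Fin.ext hc))]
    · intro h; exact absurd (Finset.mem_univ _) h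
  · have : Yext y ((i : ℕ) + 1) = 0 := by unfold Yext; rw [dif_neg hn]
    rw [this, neg_zero]
    refine Finset.sum_eq_zero fun j _ => ?_
    rw [if_neg (fun hc => hn (by rw [← hc]; exact j.isLt))]

lemma det_diffMat (n : ℕ) : (diffMat n).det = 1 := by
  have htri : (diffMat n).BlockTriangular id := by
    intro i j hij
    unfold diffMat
    rw [if_neg (fun hc => absurd (hc ▸ hij) (lt_irrefl _)), if_neg (by simp at hij; omega)]
  rw [Matrix.det_of_upperTriangular htri]
  refine Finset.prod_eq_one fun i _ => ?_
  unfold diffMat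
  rw [if_pos rfl]

lemma diff_preimage (q : ℝ≥0∞) (n : ℕ) :
    ⇑(Matrix.toLin' (diffMat n)) ⁻¹' (wSimp q n) = ordSimp q n := by
  ext y
  simp only [Set.mem_preimage, wSimp, ordSimp, Set.mem_setOf_eq, Matrix.toLin'_apply]
  have happ : ∀ i, (diffMat n).mulVec y i = y i - Yext y ((i : ℕ) + 1) := diffMat_mulVec y
  constructor
  · rintro ⟨h1, h2⟩
    have hadj : ∀ (m : ℕ) (hm : m + 1 < n), y ⟨m + 1, hm⟩ ≤ y ⟨m, by omega⟩ := by
      intro m hm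
      have := h1 ⟨m, by omega⟩
      rw [happ] at this
      have hY : Yext y (m + 1) = y ⟨m + 1, hm⟩ := by unfold Yext; rw [dif_pos hm]
      simp only [hY] at this
      linarith [this]
    have hanti : Antitone y := antitone_of_adjacent hadj
    have hnn : ∀ i, 0 ≤ y i := by
      intro i
      rcases Nat.eq_zero_or_pos n with hn | hn
      · exact absurd i.isLt (by omega)
      · have hlast : 0 ≤ y ⟨n - 1, by omega⟩ := by
          have := h1 ⟨n - 1, by omega⟩
          rw [happ] at this
          have hY : Yext (n := n) y (n - 1 + 1) = 0 := by
            unfold Yext; rw [dif_neg (by omega)]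
          simp only [hY] at this
          linarith [this]
        exact le_trans hlast (hanti (by
          show i ≤ ⟨n - 1, by omega⟩
          rw [Fin.le_def]
          simp
          omega))
    refine ⟨hanti, hnn, ?_⟩
    have := abel_identity q y
    rw [← this]
    calc ∑ i : Fin n, kappa q ((i : ℕ) + 1) * (y i - Yext y ((i : ℕ) + 1))
        = ∑ i : Fin n, kappa q ((i : ℕ) + 1) * (diffMat n).mulVec y i := by
          refine Finset.sum_congr rfl fun i _ => by rw [happ]
      _ ≤ 1 := h2
  · rintro ⟨hanti, hnn, hsum⟩
    constructor
    · intro i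
      rw [happ]
      by_cases hm : (i : ℕ) + 1 < n
      · have hY : Yext y ((i : ℕ) + 1) = y ⟨(i : ℕ) + 1, hm⟩ := by
          unfold Yext; rw [dif_pos hm]
        rw [hY, sub_nonneg]
        exact hanti (by rw [Fin.le_def]; simp)
      · have hY : Yext y ((i : ℕ) + 1) = 0 := by unfold Yext; rw [dif_neg hm]
        rw [hY, sub_zero]
        exact hnn i
    · calc ∑ i : Fin n, kappa q ((i : ℕ) + 1) * (diffMat n).mulVec y i
          = ∑ i : Fin n, kappa q ((i : ℕ) + 1) * (y i - Yext y ((i : ℕ) + 1)) := by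
            refine Finset.sum_congr rfl fun i _ => by rw [happ]
        _ = ∑ i : Fin n, lorentzWeight q ((i : ℕ) + 1) * y i := abel_identity q y
        _ ≤ 1 := hsum

lemma volume_ordSimp_eq_wSimp (q : ℝ≥0∞) (n : ℕ) :
    volume (ordSimp q n) = volume (wSimp q n) := by
  rw [← diff_preimage q n]
  have hdet : LinearMap.det (Matrix.toLin' (diffMat n)) ≠ 0 := by
    rw [LinearMap.det_toLin', det_diffMat]; norm_num
  rw [Measure.addHaar_preimage_linearMap volume hdet]
  rw [LinearMap.det_toLin', det_diffMat]
  norm_num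

lemma diag_preimage (q : ℝ≥0∞) (n : ℕ) :
    ⇑(Matrix.toLin' (Matrix.diagonal fun i : Fin n => kappa q ((i : ℕ) + 1))) ⁻¹' (stdSimp n)
      = wSimp q n := by
  ext z
  simp only [Set.mem_preimage, stdSimp, wSimp, Set.mem_setOf_eq, Matrix.toLin'_apply]
  have happ : ∀ i, (Matrix.diagonal fun i : Fin n => kappa q ((i : ℕ) + 1)).mulVec z i
      = kappa q ((i : ℕ) + 1) * z i := fun i => Matrix.mulVec_diagonal _ _ _
  constructor
  · rintro ⟨h1, h2⟩
    refine ⟨fun i => ?_, ?_⟩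
    · have := h1 i
      rw [happ] at this
      exact nonneg_of_mul_nonneg_right this (kappa_pos q i)
    · calc ∑ i : Fin n, kappa q ((i : ℕ) + 1) * z i
          = ∑ i : Fin n, (Matrix.diagonal fun i : Fin n => kappa q ((i : ℕ) + 1)).mulVec z i := by
            refine Finset.sum_congr rfl fun i _ => (happ i).symm
        _ ≤ 1 := h2
  · rintro ⟨h1, h2⟩
    refine ⟨fun i => ?_, ?_⟩
    · rw [happ]
      exact mul_nonneg (kappa_pos q (i : ℕ)).le (h1 i)
    · calc ∑ i : Fin n, (Matrix.diagonal fun i : Fin n => kappa q ((i : ℕ) + 1)).mulVec z i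
          = ∑ i : Fin n, kappa q ((i : ℕ) + 1) * z i := by
            refine Finset.sum_congr rfl fun i _ => happ i
        _ ≤ 1 := h2

lemma volume_wSimp (q : ℝ≥0∞) (n : ℕ) :
    volume (wSimp q n)
      = ENNReal.ofReal (∏ i : Fin n, (kappa q ((i : ℕ) + 1))⁻¹) * volume (stdSimp n) := by
  rw [← diag_preimage q n]
  have hdet : LinearMap.det (Matrix.toLin'
      (Matrix.diagonal fun i : Fin n => kappa q ((i : ℕ) + 1)))
      = ∏ i : Fin n, kappa q ((i : ℕ) + 1) := by
    rw [LinearMap.det_toLin', Matrix.det_diagonal]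
  have hpos : (0:ℝ) < ∏ i : Fin n, kappa q ((i : ℕ) + 1) :=
    Finset.prod_pos fun i _ => kappa_pos q i
  rw [Measure.addHaar_preimage_linearMap volume (by rw [hdet]; exact hpos.ne') ]
  rw [hdet, abs_inv, abs_of_pos hpos, ← Finset.prod_inv_distrib]



/-- The volume of the Lorentz unit ball `B_{q,1}^n` equals `2^n ∏_{i=1}^n κ_q(i)⁻¹`. -/
theorem volume_lorentzBall (q : ℝ≥0∞) (hq : 1 ≤ q) (n : ℕ) :
    volume (lorentzBall q n)
      = ENNReal.ofReal (2 ^ n * ∏ i ∈ Finset.range n, (kappa q (i + 1))⁻¹) := by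
  rw [volume_ball_decomp q, volume_ball_inter_cone0 q, volume_ordSimp_eq_wSimp,
    volume_wSimp, volume_stdSimp]
  have hP : (0:ℝ) ≤ ∏ i : Fin n, (kappa q ((i : ℕ) + 1))⁻¹ :=
    Finset.prod_nonneg fun i _ => inv_nonneg.2 (kappa_pos q (i : ℕ)).le
  rw [← ENNReal.ofReal_mul hP, ← ENNReal.ofReal_natCast, ← ENNReal.ofReal_mul (by positivity)]
  congr 1
  rw [Fin.prod_univ_eq_prod_range (fun m => (kappa q (m + 1))⁻¹) n]
  have hfac : ((n ! : ℕ) : ℝ) ≠ 0 := Nat.cast_ne_zero.2 (Nat.factorial_ne_zero n)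
  have hPpos : (0:ℝ) < ∏ x ∈ Finset.range n, kappa q (x + 1) :=
    Finset.prod_pos fun x _ => kappa_pos q x
  push_cast
  field_simp

end AuxLorentz

end
end

section
/- For q = ∞, the volume radius of the Lorentz unit ball satisfies (log n) · vol_n(B_{∞,1}^n)^{1/n} → 2 as n → ∞. -/
open MeasureTheory Finset Filter
open scoped ENNReal NNReal

noncomputable section

/-- The Lorentz norm `‖x‖_{∞,1} = ∑_{i=1}^n i⁻¹ x_i^*`. -/
def lorentzNormInf {n : ℕ} (x : Fin n → ℝ) : ℝ :=
  ∑ i : Fin n, ((i : ℝ) + 1)⁻¹ * sortedAbs x i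

/-- The unit ball of the Lorentz space `ℓ_{∞,1}^n`. -/
def lorentzBallInf (n : ℕ) : Set (Fin n → ℝ) :=
  {x | lorentzNormInf x ≤ 1}

namespace LorentzVol

open scoped Topology

variable {n : ℕ}

/-! ### Basic facts about `sortedAbs` and `lorentzNormInf` -/

/-- The coefficients of the Lorentz norm. -/
def c (n : ℕ) (i : Fin n) : ℝ := ((i : ℝ) + 1)⁻¹

lemma c_pos (i : Fin n) : 0 < c n i := by
  have : (0:ℝ) < (i : ℝ) + 1 := by positivity
  exact inv_pos.mpr this

lemma c_antitone : Antitone (c n) := by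
  intro i j hij
  have h1 : (0:ℝ) < (i : ℝ) + 1 := by positivity
  have h2 : ((i : ℝ) + 1) ≤ ((j : ℝ) + 1) := by
    have : (i : ℝ) ≤ (j : ℝ) := by exact_mod_cast (Fin.le_def.mp hij)
    linarith
  exact inv_anti₀ h1 h2

lemma sortedAbs_nonneg (x : Fin n → ℝ) (i : Fin n) : 0 ≤ sortedAbs x i := abs_nonneg _

lemma sortedAbs_antitone (x : Fin n → ℝ) : Antitone (sortedAbs x) := by
  intro i j hij
  have h := Tuple.monotone_sort (fun j => |x j|)
  exact h (Fin.rev_le_rev.mpr hij)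

/-- A permutation carrying `|x|` to `sortedAbs x`. -/
def sortPerm (x : Fin n → ℝ) : Equiv.Perm (Fin n) :=
  ((Tuple.sort (fun j => |x j|))⁻¹ : Equiv.Perm (Fin n)).trans Fin.revPerm

lemma sortedAbs_sortPerm (x : Fin n → ℝ) (j : Fin n) :
    sortedAbs x (sortPerm x j) = |x j| := by
  simp [sortedAbs, sortPerm, Fin.rev_rev, Equiv.apply_symm_apply]

lemma lorentzNormInf_eq_sum_c (x : Fin n → ℝ) :
    lorentzNormInf x = ∑ i, c n i * sortedAbs x i := rfl

lemma lorentzNormInf_eq_sup' [NeZero n] (x : Fin n → ℝ) :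
    lorentzNormInf x = Finset.univ.sup' ⟨1, mem_univ 1⟩
      (fun σ : Equiv.Perm (Fin n) => ∑ i, c n i * |x (σ i)|) := by
  have hmono : Monovary (c n) (sortedAbs x) :=
    (c_antitone).monovary (sortedAbs_antitone x)
  apply le_antisymm
  · refine Finset.le_sup'_of_le _ (mem_univ (sortPerm x)⁻¹) (le_of_eq ?_)
    rw [lorentzNormInf_eq_sum_c]
    refine Finset.sum_congr rfl fun i _ => ?_
    have h := sortedAbs_sortPerm x ((sortPerm x)⁻¹ i)
    rw [show sortPerm x ((sortPerm x)⁻¹ i) = i from (sortPerm x).apply_symm_apply i] at h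
    rw [h]
  · refine Finset.sup'_le _ _ fun σ _ => ?_
    have key : ∀ i, |x (σ i)| = sortedAbs x ((σ.trans (sortPerm x)) i) := fun i =>
      (sortedAbs_sortPerm x (σ i)).symm
    calc ∑ i, c n i * |x (σ i)|
        = ∑ i, c n i • sortedAbs x ((σ.trans (sortPerm x)) i) := by
          simp only [smul_eq_mul]
          exact Finset.sum_congr rfl fun i _ => by rw [key]
      _ ≤ ∑ i, c n i • sortedAbs x i := hmono.sum_smul_comp_perm_le_sum_smul
      _ = lorentzNormInf x := by
          rw [lorentzNormInf_eq_sum_c]; simp [smul_eq_mul]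

lemma continuous_lorentzNormInf [NeZero n] :
    Continuous (lorentzNormInf : (Fin n → ℝ) → ℝ) := by
  have hcont : ∀ σ : Equiv.Perm (Fin n),
      Continuous fun x : Fin n → ℝ => ∑ i, c n i * |x (σ i)| := fun σ =>
    continuous_finset_sum _ fun i _ => continuous_const.mul (continuous_apply (σ i)).abs
  set F : C(Fin n → ℝ, ℝ) := Finset.univ.sup' ⟨1, mem_univ 1⟩
    (fun σ : Equiv.Perm (Fin n) => ⟨_, hcont σ⟩) with hF
  have h : (lorentzNormInf : (Fin n → ℝ) → ℝ) = ⇑F := by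
    funext x
    rw [lorentzNormInf_eq_sup', hF]
    exact (ContinuousMap.sup'_apply (s := univ) univ_nonempty
      (fun σ : Equiv.Perm (Fin n) => (⟨_, hcont σ⟩ : C(Fin n → ℝ, ℝ))) x).symm
  rw [h]
  exact F.continuous

lemma measurableSet_lorentzBallInf [NeZero n] : MeasurableSet (lorentzBallInf n) := by
  have h : lorentzBallInf n = lorentzNormInf ⁻¹' Set.Iic 1 := rfl
  rw [h]
  exact (continuous_lorentzNormInf.measurable) measurableSet_Iic

lemma sortedAbs_comp_perm (x : Fin n → ℝ) (σ : Equiv.Perm (Fin n)) :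
    sortedAbs (x ∘ σ) = sortedAbs x := by
  funext i
  have h := Tuple.comp_perm_comp_sort_eq_comp_sort (f := fun j => |x j|) (σ := σ)
  calc sortedAbs (x ∘ σ) i
      = (((fun j => |x j|) ∘ ⇑σ) ∘ ⇑(Tuple.sort ((fun j => |x j|) ∘ ⇑σ))) i.rev := rfl
    _ = ((fun j => |x j|) ∘ ⇑(Tuple.sort fun j => |x j|)) i.rev := by rw [h]
    _ = sortedAbs x i := rfl

lemma lorentzNormInf_comp_perm (x : Fin n → ℝ) (σ : Equiv.Perm (Fin n)) :
    lorentzNormInf (x ∘ σ) = lorentzNormInf x := by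
  rw [lorentzNormInf_eq_sum_c, lorentzNormInf_eq_sum_c, sortedAbs_comp_perm]

lemma sortedAbs_congr_abs {x y : Fin n → ℝ} (h : ∀ j, |x j| = |y j|) :
    sortedAbs x = sortedAbs y := by
  have hxy : (fun j => |x j|) = fun j => |y j| := funext h
  funext i
  show |x (Tuple.sort (fun j => |x j|) i.rev)| = |y (Tuple.sort (fun j => |y j|) i.rev)|
  rw [h, hxy]

lemma sortedAbs_of_strictAnti {x : Fin n → ℝ} (hx : StrictAnti x) (hpos : ∀ i, 0 < x i) :
    sortedAbs x = x := by
  have habs : (fun j => |x j|) = x := funext fun j => abs_of_pos (hpos j)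
  have h1 : Monotone ((fun j => |x j|) ∘ ⇑(Tuple.sort fun j => |x j|)) :=
    Tuple.monotone_sort _
  have h2 : Monotone ((fun j => |x j|) ∘ ⇑(Fin.revPerm : Equiv.Perm (Fin n))) := by
    intro i j hij
    simp only [Function.comp_apply, Fin.revPerm_apply, habs]
    exact hx.antitone (Fin.rev_le_rev.mpr hij)
  have h3 := Tuple.unique_monotone h1 h2
  funext i
  calc sortedAbs x i
      = ((fun j => |x j|) ∘ ⇑(Tuple.sort fun j => |x j|)) i.rev := rfl
    _ = ((fun j => |x j|) ∘ ⇑(Fin.revPerm : Equiv.Perm (Fin n))) i.rev := by rw [h3]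
    _ = x i := by simp [habs, Fin.rev_rev]

lemma lorentzNormInf_of_strictAnti {x : Fin n → ℝ} (hx : StrictAnti x)
    (hpos : ∀ i, 0 < x i) : lorentzNormInf x = ∑ i, c n i * x i := by
  rw [lorentzNormInf_eq_sum_c, sortedAbs_of_strictAnti hx hpos]

/-! ### Null sets given by linear equations -/

lemma volume_linear_eq_const {f : (Fin n → ℝ) →ₗ[ℝ] ℝ} (hf : f ≠ 0) (a : ℝ) :
    volume {x : Fin n → ℝ | f x = a} = 0 := by
  obtain ⟨v, hv⟩ : ∃ v, f v ≠ 0 := by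
    by_contra h
    push_neg at h
    exact hf (LinearMap.ext fun v => by simp [h v])
  set x₀ : Fin n → ℝ := (a / f v) • v with hx₀def
  have hx₀ : f x₀ = a := by
    rw [hx₀def, LinearMap.map_smul, smul_eq_mul, div_mul_cancel₀ _ hv]
  set s : AffineSubspace ℝ (Fin n → ℝ) := AffineSubspace.mk' x₀ (LinearMap.ker f) with hsdef
  have hset : {x : Fin n → ℝ | f x = a} = (s : Set (Fin n → ℝ)) := by
    ext x
    rw [Set.mem_setOf_eq, hsdef, SetLike.mem_coe, AffineSubspace.mem_mk']
    simp only [vsub_eq_sub, LinearMap.mem_ker, map_sub, hx₀, sub_eq_zero]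
  rw [hset]
  refine Measure.addHaar_affineSubspace volume s fun htop => ?_
  have hmem : x₀ + v ∈ s := htop ▸ AffineSubspace.mem_top ℝ _ _
  rw [hsdef, AffineSubspace.mem_mk'] at hmem
  simp only [vsub_eq_sub, add_sub_cancel_left, LinearMap.mem_ker] at hmem
  exact hv hmem

lemma volume_eval_eq (i : Fin n) : volume {x : Fin n → ℝ | x i = 0} = 0 := by
  set f : (Fin n → ℝ) →ₗ[ℝ] ℝ := LinearMap.proj i with hfdef
  have h : {x : Fin n → ℝ | x i = 0} = {x : Fin n → ℝ | f x = 0} := rfl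
  rw [h]
  refine volume_linear_eq_const (fun hc => ?_) 0
  have h1 := LinearMap.congr_fun hc (Pi.single i (1:ℝ))
  rw [hfdef] at h1
  simp at h1

lemma volume_eval_eq_eval {i j : Fin n} (hij : i ≠ j) :
    volume {x : Fin n → ℝ | x i = x j} = 0 := by
  set f : (Fin n → ℝ) →ₗ[ℝ] ℝ :=
    (LinearMap.proj (R := ℝ) (φ := fun _ : Fin n => ℝ) i)
      - (LinearMap.proj (R := ℝ) (φ := fun _ : Fin n => ℝ) j) with hfdef
  have h : {x : Fin n → ℝ | x i = x j} = {x : Fin n → ℝ | f x = 0} := by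
    ext x
    rw [Set.mem_setOf_eq, Set.mem_setOf_eq, hfdef]
    simp [sub_eq_zero]
  rw [h]
  refine volume_linear_eq_const (fun hc => ?_) 0
  have h1 := LinearMap.congr_fun hc (Pi.single i (1:ℝ))
  rw [hfdef] at h1
  simp [Pi.single_eq_of_ne (Ne.symm hij)] at h1

lemma volume_sum_eq_one [NeZero n] :
    volume {u : Fin n → ℝ | ∑ j, u j = 1} = 0 := by
  set f : (Fin n → ℝ) →ₗ[ℝ] ℝ := ∑ i, LinearMap.proj i with hfdef
  have happ : ∀ u : Fin n → ℝ, f u = ∑ j, u j := by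
    intro u; rw [hfdef]; simp
  have h : {u : Fin n → ℝ | ∑ j, u j = 1} = {u : Fin n → ℝ | f u = 1} := by
    ext u; rw [Set.mem_setOf_eq, Set.mem_setOf_eq, happ]
  rw [h]
  refine volume_linear_eq_const (fun hc => ?_) 1
  have h1 := LinearMap.congr_fun hc (Pi.single (0 : Fin n) (1:ℝ))
  rw [happ] at h1
  simp at h1

/-! ### A generic decomposition lemma -/

lemma volume_eq_card_mul {ι : Type*} [Fintype ι] {S : Set (Fin n → ℝ)}
    (T : ι → Set (Fin n → ℝ)) (hT : ∀ k, MeasurableSet (S ∩ T k))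
    (hdisj : Pairwise (Function.onFun Disjoint fun k => S ∩ T k))
    {bad : Set (Fin n → ℝ)} (hbad : volume bad = 0)
    (hcover : S ⊆ (⋃ k, S ∩ T k) ∪ bad)
    (v : ℝ≥0∞) (hv : ∀ k, volume (S ∩ T k) = v) :
    volume S = (Fintype.card ι : ℝ≥0∞) * v := by
  have h1 : volume S = volume (⋃ k, S ∩ T k) := by
    refine le_antisymm ?_ (measure_mono (Set.iUnion_subset fun k => Set.inter_subset_left))
    calc volume S ≤ volume ((⋃ k, S ∩ T k) ∪ bad) := measure_mono hcover
      _ ≤ volume (⋃ k, S ∩ T k) + volume bad := measure_union_le _ _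
      _ = volume (⋃ k, S ∩ T k) := by rw [hbad, add_zero]
  rw [h1, measure_iUnion hdisj hT, tsum_fintype]
  simp only [hv, Finset.sum_const, card_univ, nsmul_eq_mul]

/-! ### Sign-flip decomposition -/

/-- flip the signs of the coordinates indicated by `ε`. -/
def flipMap (ε : Fin n → Bool) : (Fin n → ℝ) → (Fin n → ℝ) :=
  fun x i => if ε i then -(x i) else x i

lemma measurePreserving_flipMap (ε : Fin n → Bool) :
    MeasurePreserving (flipMap ε) (volume : Measure (Fin n → ℝ)) volume := by
  set f : Fin n → ℝ → ℝ := fun i => if ε i then (fun r => -r) else id with hfdef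
  have hf : ∀ i, MeasurePreserving (f i) volume volume := by
    intro i
    by_cases h : ε i
    · simpa [hfdef, h] using Measure.measurePreserving_neg (volume : Measure ℝ)
    · simpa [hfdef, h] using MeasurePreserving.id (volume : Measure ℝ)
  have h := volume_preserving_pi hf
  have heq : (fun (a : Fin n → ℝ) i => f i (a i)) = flipMap ε := by
    funext a i
    rw [hfdef, flipMap]
    by_cases h : ε i <;> simp [h]
  rwa [heq] at h

/-- the positive orthant -/
def Qpos (n : ℕ) : Set (Fin n → ℝ) := {x | ∀ i, 0 < x i}

lemma measurableSet_Qpos : MeasurableSet (Qpos n) := by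
  have h : Qpos n = ⋂ i, {x : Fin n → ℝ | 0 < x i} := by
    ext x; simp [Qpos]
  rw [h]
  exact MeasurableSet.iInter fun i =>
    measurableSet_lt measurable_const (measurable_pi_apply i)

lemma volume_eq_pow_mul_inter_Qpos {S : Set (Fin n → ℝ)} (hS : MeasurableSet S)
    (hinv : ∀ ε, flipMap ε ⁻¹' S = S) :
    volume S = 2^n * volume (S ∩ Qpos n) := by
  classical
  have hcard : ((Fintype.card (Fin n → Bool) : ℕ) : ℝ≥0∞) = 2^n := by
    rw [Fintype.card_fun]
    simp
  rw [← hcard]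
  refine volume_eq_card_mul (fun ε => flipMap ε ⁻¹' Qpos n)
      (fun ε => hS.inter ((measurePreserving_flipMap ε).measurable measurableSet_Qpos))
      ?_ (bad := ⋃ i, {x : Fin n → ℝ | x i = 0}) ?_ ?_ (volume (S ∩ Qpos n)) ?_
  · intro ε ε' hne
    refine Set.disjoint_left.mpr fun x hx hx' => hne ?_
    funext i
    by_contra hi
    have h1 : 0 < (if ε i then -(x i) else x i) := hx.2 i
    have h2 : 0 < (if ε' i then -(x i) else x i) := hx'.2 i
    cases hb : ε i <;> cases hb' : ε' i
    · exact hi (by rw [hb, hb'])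
    · rw [hb] at h1; rw [hb'] at h2; simp only [if_true, if_false, Bool.false_eq_true] at h1 h2
      linarith
    · rw [hb] at h1; rw [hb'] at h2; simp only [if_true, if_false, Bool.false_eq_true] at h1 h2
      linarith
    · exact hi (by rw [hb, hb'])
  · exact measure_iUnion_null fun i => volume_eval_eq i
  · intro x hx
    by_cases hxi : ∀ i, x i ≠ 0
    · left
      refine Set.mem_iUnion.mpr ⟨fun i => decide (x i < 0), hx, fun i => ?_⟩
      show 0 < (if decide (x i < 0) then -(x i) else x i)
      by_cases h : x i < 0
      · rw [if_pos (decide_eq_true h)]; linarith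
      · rw [if_neg (by simpa using h)]
        exact lt_of_le_of_ne (not_lt.mp h) (Ne.symm (hxi i))
    · right
      push_neg at hxi
      obtain ⟨i, hi⟩ := hxi
      exact Set.mem_iUnion.mpr ⟨i, hi⟩
  · intro ε
    have key : S ∩ flipMap ε ⁻¹' Qpos n = flipMap ε ⁻¹' (S ∩ Qpos n) := by
      rw [Set.preimage_inter, hinv ε]
    rw [key, (measurePreserving_flipMap ε).measure_preimage
      ((hS.inter measurableSet_Qpos).nullMeasurableSet)]

/-! ### Permutation decomposition -/

lemma measurePreserving_permMap (σ : Equiv.Perm (Fin n)) :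
    MeasurePreserving (fun x : Fin n → ℝ => x ∘ σ) volume volume :=
  (volume_measurePreserving_piCongrLeft (fun _ : Fin n => ℝ) σ).symm
    (MeasurableEquiv.piCongrLeft (fun _ : Fin n => ℝ) σ)

/-- the strictly decreasing cone -/
def Adec (n : ℕ) : Set (Fin n → ℝ) := {x | StrictAnti x}

lemma measurableSet_Adec : MeasurableSet (Adec n) := by
  have h : Adec n = ⋂ (i : Fin n), ⋂ (j : Fin n), ⋂ (_ : i < j), {x : Fin n → ℝ | x j < x i} := by
    ext x
    simp only [Adec, Set.mem_setOf_eq, Set.mem_iInter]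
    exact ⟨fun h i j hij => h hij, fun h a b hab => h a b hab⟩
  rw [h]
  exact MeasurableSet.iInter fun i => MeasurableSet.iInter fun j =>
    MeasurableSet.iInter fun _ =>
      measurableSet_lt (measurable_pi_apply j) (measurable_pi_apply i)

lemma volume_eq_factorial_mul_inter_Adec {S : Set (Fin n → ℝ)} (hS : MeasurableSet S)
    (hinv : ∀ σ : Equiv.Perm (Fin n), (fun x : Fin n → ℝ => x ∘ σ) ⁻¹' S = S) :
    volume S = (n.factorial : ℝ≥0∞) * volume (S ∩ Adec n) := by
  classical
  have hcard : ((Fintype.card (Equiv.Perm (Fin n)) : ℕ) : ℝ≥0∞) = (n.factorial : ℝ≥0∞) := by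
    rw [Fintype.card_perm, Fintype.card_fin]
  rw [← hcard]
  refine volume_eq_card_mul
      (fun σ : Equiv.Perm (Fin n) => (fun x : Fin n → ℝ => x ∘ σ) ⁻¹' Adec n)
      (fun σ => hS.inter ((measurePreserving_permMap σ).measurable measurableSet_Adec))
      ?_ (bad := ⋃ (i : Fin n), ⋃ (j : Fin n), ⋃ (_ : i ≠ j), {x : Fin n → ℝ | x i = x j})
      ?_ ?_ (volume (S ∩ Adec n)) ?_
  · intro σ τ hne
    refine Set.disjoint_left.mpr fun x hx hx' => hne ?_
    have h1 : StrictAnti (x ∘ σ) := hx.2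
    have h2 : StrictAnti (x ∘ τ) := hx'.2
    have hmono : StrictMono fun i => σ⁻¹ (τ i) := by
      intro i j hij
      have hxx : (x ∘ σ) (σ⁻¹ (τ j)) < (x ∘ σ) (σ⁻¹ (τ i)) := by
        simpa [Function.comp, Equiv.apply_symm_apply] using h2 hij
      exact h1.lt_iff_gt.mp hxx
    have hrange : Set.range (fun i : Fin n => σ⁻¹ (τ i)) = Set.range (id : Fin n → Fin n) := by
      rw [Set.range_id]
      exact Set.range_eq_univ.mpr ((σ⁻¹).surjective.comp τ.surjective)
    have hid : (fun i : Fin n => σ⁻¹ (τ i)) = (id : Fin n → Fin n) := by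
      have h := @StrictMono.range_inj (Fin n) (Fin n) _ _
        (inferInstance : WellFoundedLT (Fin n)) (fun i : Fin n => σ⁻¹ (τ i)) id
        hmono (strictMono_id (α := Fin n))
      exact h.mp hrange
    refine Equiv.ext fun i => ?_
    have hi := congrFun hid i
    simp only [id_eq] at hi
    have h := congrArg σ hi
    rw [Equiv.Perm.inv_def, Equiv.apply_symm_apply] at h
    exact h.symm
  · exact measure_iUnion_null fun i => measure_iUnion_null fun j =>
      measure_iUnion_null fun hij => volume_eval_eq_eval hij
  · intro x hxS
    by_cases hinj : Function.Injective x
    · left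
      set σ := Tuple.sort (fun j => -x j) with hσ
      refine Set.mem_iUnion.mpr ⟨σ, hxS, ?_⟩
      show StrictAnti (x ∘ σ)
      have hmono := Tuple.monotone_sort (fun j => -x j)
      have hanti : Antitone (x ∘ ⇑σ) := by
        intro i j hij
        have h := hmono hij
        simpa using h
      exact hanti.strictAnti_of_injective (hinj.comp σ.injective)
    · right
      rw [Function.not_injective_iff] at hinj
      obtain ⟨a, b, hab, hne⟩ := hinj
      exact Set.mem_iUnion.mpr ⟨a, Set.mem_iUnion.mpr ⟨b, Set.mem_iUnion.mpr ⟨hne, hab⟩⟩⟩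
  · intro σ
    have key : S ∩ (fun x : Fin n → ℝ => x ∘ σ) ⁻¹' Adec n
        = (fun x : Fin n → ℝ => x ∘ σ) ⁻¹' (S ∩ Adec n) := by
      rw [Set.preimage_inter, hinv σ]
    rw [key, (measurePreserving_permMap σ).measure_preimage
      ((hS.inter measurableSet_Adec).nullMeasurableSet)]

/-! ### The triangular change of variables -/

/-- the triangular linear map `u ↦ (∑_{j ≥ i} w j * u j)_i`. -/
def triMap (w : Fin n → ℝ) : (Fin n → ℝ) →ₗ[ℝ] (Fin n → ℝ) :=
  Matrix.toLin' (Matrix.of fun i j => if i ≤ j then w j else 0)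

lemma Ici_eq_filter (i : Fin n) : Finset.Ici i = univ.filter (fun j => i ≤ j) := by
  ext k; simp

lemma Iic_eq_filter (j : Fin n) : Finset.Iic j = univ.filter (fun i => i ≤ j) := by
  ext k; simp

lemma triMap_apply (w : Fin n → ℝ) (u : Fin n → ℝ) (i : Fin n) :
    triMap w u i = ∑ j ∈ Finset.Ici i, w j * u j := by
  classical
  rw [Ici_eq_filter, Finset.sum_filter]
  simp [triMap, Matrix.toLin'_apply, Matrix.mulVec, dotProduct, ite_mul]

lemma det_triMap (w : Fin n → ℝ) : LinearMap.det (triMap w) = ∏ j, w j := by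
  have htri : (Matrix.of fun i j : Fin n => if i ≤ j then w j else 0).BlockTriangular id := by
    intro i j hij
    simp only [Matrix.of_apply]
    exact if_neg (not_le.mpr hij)
  rw [triMap, LinearMap.det_toLin', Matrix.det_of_upperTriangular htri]
  exact Finset.prod_congr rfl fun i _ => by simp

lemma sum_d_triMap {w d : Fin n → ℝ} (hw : ∀ j, (0:ℝ) < w j)
    (hd : ∀ j, ∑ i ∈ Finset.Iic j, d i = (w j)⁻¹) (u : Fin n → ℝ) :
    ∑ i, d i * triMap w u i = ∑ j, u j := by
  classical
  have step1 : ∑ i, d i * triMap w u i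
      = ∑ i : Fin n, ∑ j : Fin n, (if i ≤ j then d i * (w j * u j) else 0) := by
    refine Finset.sum_congr rfl fun i _ => ?_
    rw [triMap_apply, Finset.mul_sum, Ici_eq_filter, Finset.sum_filter]
  rw [step1, Finset.sum_comm]
  refine Finset.sum_congr rfl fun j _ => ?_
  have h : ∑ i : Fin n, (if i ≤ j then d i * (w j * u j) else 0)
      = (∑ i ∈ Finset.Iic j, d i) * (w j * u j) := by
    rw [Finset.sum_mul, Iic_eq_filter, Finset.sum_filter]
  rw [h, hd j, inv_mul_cancel_left₀ (hw j).ne']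

lemma triMap_image {w d : Fin n → ℝ} (hw : ∀ j, (0:ℝ) < w j)
    (hd : ∀ j, ∑ i ∈ Finset.Iic j, d i = (w j)⁻¹) (P : ℝ → Prop) :
    triMap w '' {u | (∀ i, 0 < u i) ∧ P (∑ j, u j)}
      = {x | StrictAnti x ∧ (∀ i, 0 < x i) ∧ P (∑ i, d i * x i)} := by
  apply Set.Subset.antisymm
  · rintro x ⟨u, ⟨hu, hP⟩, rfl⟩
    refine ⟨?_, ?_, ?_⟩
    · intro i j hij
      simp only [triMap_apply]
      refine Finset.sum_lt_sum_of_subset (Finset.Ici_subset_Ici.mpr hij.le)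
        (Finset.mem_Ici.mpr le_rfl)
        (fun hmem => absurd (Finset.mem_Ici.mp hmem) (not_le.mpr hij))
        (mul_pos (hw i) (hu i)) ?_
      exact fun k _ _ => (mul_pos (hw k) (hu k)).le
    · intro i
      rw [triMap_apply]
      exact Finset.sum_pos (fun j _ => mul_pos (hw j) (hu j)) ⟨i, Finset.mem_Ici.mpr le_rfl⟩
    · rw [sum_d_triMap hw hd u]
      exact hP
  · rintro x ⟨hanti, hpos, hP⟩
    have hdet : LinearMap.det (triMap w) ≠ 0 := by
      rw [det_triMap]
      exact (Finset.prod_pos fun j _ => hw j).ne'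
    obtain ⟨u, hu⟩ : ∃ u, triMap w u = x :=
      (LinearMap.equivOfDetNeZero (triMap w) hdet).surjective x
    refine ⟨u, ⟨?_, ?_⟩, hu⟩
    · intro j
      have hform : ∀ k, w k * u k = triMap w u k - ∑ l ∈ Finset.Ioi k, w l * u l := by
        intro k
        rw [triMap_apply, Finset.Ici_eq_cons_Ioi, Finset.sum_cons]
        ring
      have extract : 0 < w j * u j → 0 < u j := by
        intro hwu
        by_contra hneg
        push_neg at hneg
        have := mul_nonpos_of_nonneg_of_nonpos (hw j).le hneg
        linarith
      by_cases hj : (j : ℕ) + 1 < n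
      · set j' : Fin n := ⟨(j : ℕ) + 1, hj⟩ with hj'def
        have hIoi : Finset.Ioi j = Finset.Ici j' := by
          ext k
          simp only [Finset.mem_Ioi, Finset.mem_Ici, Fin.lt_def, Fin.le_def, hj'def]
          omega
        have hval : w j * u j = x j - x j' := by
          rw [hform j, hIoi, ← triMap_apply, hu]
        have hlt : x j' < x j := hanti (by simp [Fin.lt_def, hj'def])
        refine extract ?_
        rw [hval]
        linarith
      · have hIoi : Finset.Ioi j = (∅ : Finset (Fin n)) := by
          ext k
          simp only [Finset.mem_Ioi, Finset.notMem_empty, iff_false, Fin.lt_def]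
          have := k.isLt
          omega
        have hval : w j * u j = x j := by
          rw [hform j, hIoi, Finset.sum_empty, sub_zero, hu]
        exact extract (hval ▸ hpos j)
    · have h := sum_d_triMap hw hd u
      rw [hu] at h
      rw [h] at hP
      exact hP

/-! ### Volume of the simplex -/

lemma volume_simplex_lt [NeZero n] :
    volume {u : Fin n → ℝ | (∀ i, 0 < u i) ∧ ∑ j, u j < 1}
      = ((n.factorial : ℝ≥0∞))⁻¹ := by
  classical
  set Δ : Set (Fin n → ℝ) := {u | (∀ i, 0 < u i) ∧ ∑ j, u j < 1} with hΔ
  set cube : Set (Fin n → ℝ) := Set.univ.pi fun _ => Set.Ioo (0:ℝ) 1 with hcube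
  have hcube_mem : ∀ x : Fin n → ℝ, x ∈ cube ↔ ∀ i, 0 < x i ∧ x i < 1 := by
    intro x; simp [hcube, Set.mem_pi, Set.mem_Ioo]
  have hcube_vol : volume cube = 1 := by
    rw [hcube, volume_pi_pi]
    simp [Real.volume_Ioo]
  have hmeas : MeasurableSet cube := MeasurableSet.univ_pi fun i => measurableSet_Ioo
  have hinv : ∀ σ : Equiv.Perm (Fin n), (fun x : Fin n → ℝ => x ∘ σ) ⁻¹' cube = cube := by
    intro σ
    ext x
    rw [Set.mem_preimage, hcube_mem, hcube_mem]
    constructor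
    · intro h i
      have := h (σ⁻¹ i)
      simpa [Function.comp] using this
    · intro h i
      exact h (σ i)
  have hdec := volume_eq_factorial_mul_inter_Adec hmeas hinv
  rw [hcube_vol] at hdec
  have himg := triMap_image (w := fun _ : Fin n => (1:ℝ)) (d := Pi.single (0 : Fin n) (1:ℝ))
      (fun _ => one_pos)
      (fun j => by
        rw [Finset.sum_pi_single']
        rw [if_pos (Finset.mem_Iic.mpr (Fin.zero_le j))]
        norm_num) ((· < 1))
  have hset : cube ∩ Adec n = triMap (fun _ => (1:ℝ)) '' Δ := by
    rw [hΔ, himg]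
    ext x
    have hsum : ∑ i, (Pi.single (0 : Fin n) (1:ℝ) : Fin n → ℝ) i * x i = x 0 := by
      rw [Finset.sum_eq_single (0 : Fin n)]
      · simp
      · intro b _ hb; simp [Pi.single_eq_of_ne hb]
      · intro h; exact absurd (mem_univ _) h
    constructor
    · rintro ⟨hcube', hanti⟩
      rw [hcube_mem] at hcube'
      exact ⟨hanti, fun i => (hcube' i).1, by rw [hsum]; exact (hcube' 0).2⟩
    · rintro ⟨hanti, hpos, hlt⟩
      rw [hsum] at hlt
      refine ⟨(hcube_mem x).mpr fun i => ⟨hpos i, ?_⟩, hanti⟩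
      exact lt_of_le_of_lt (hanti.antitone (Fin.zero_le i)) hlt
  rw [hset, Measure.addHaar_image_linearMap, det_triMap] at hdec
  simp only [Finset.prod_const_one, abs_one, ENNReal.ofReal_one, one_mul] at hdec
  have hfact0 : (n.factorial : ℝ≥0∞) ≠ 0 := Nat.cast_ne_zero.mpr n.factorial_ne_zero
  have hfactt : (n.factorial : ℝ≥0∞) ≠ ⊤ := ENNReal.natCast_ne_top _
  calc volume Δ
      = (n.factorial : ℝ≥0∞)⁻¹ * ((n.factorial : ℝ≥0∞) * volume Δ) := by
        rw [← mul_assoc, ENNReal.inv_mul_cancel hfact0 hfactt, one_mul]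
    _ = ((n.factorial : ℝ≥0∞))⁻¹ := by rw [← hdec, mul_one]

lemma volume_simplex_le [NeZero n] :
    volume {u : Fin n → ℝ | (∀ i, 0 < u i) ∧ ∑ j, u j ≤ 1}
      = ((n.factorial : ℝ≥0∞))⁻¹ := by
  rw [← volume_simplex_lt]
  apply le_antisymm
  · calc volume {u : Fin n → ℝ | (∀ i, 0 < u i) ∧ ∑ j, u j ≤ 1}
        ≤ volume ({u : Fin n → ℝ | (∀ i, 0 < u i) ∧ ∑ j, u j < 1}
            ∪ {u : Fin n → ℝ | ∑ j, u j = 1}) := by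
          refine measure_mono fun u hu => ?_
          rcases lt_or_eq_of_le hu.2 with h | h
          · exact Or.inl ⟨hu.1, h⟩
          · exact Or.inr h
      _ ≤ volume {u : Fin n → ℝ | (∀ i, 0 < u i) ∧ ∑ j, u j < 1}
            + volume {u : Fin n → ℝ | ∑ j, u j = 1} := measure_union_le _ _
      _ = volume {u : Fin n → ℝ | (∀ i, 0 < u i) ∧ ∑ j, u j < 1} := by
          rw [volume_sum_eq_one, add_zero]
  · exact measure_mono fun u hu => ⟨hu.1, hu.2.le⟩

/-! ### The volume of the Lorentz ball -/

/-- partial sums of the coefficients: `Hc n j = harmonic (j+1)`. -/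
def Hc (n : ℕ) (j : Fin n) : ℝ := ∑ i ∈ Finset.Iic j, c n i

lemma Hc_pos (j : Fin n) : 0 < Hc n j :=
  Finset.sum_pos (fun i _ => c_pos i) ⟨j, Finset.mem_Iic.mpr le_rfl⟩

theorem volume_lorentzBallInf_eq (n : ℕ) [NeZero n] :
    volume (lorentzBallInf n) = 2^n * ENNReal.ofReal (∏ j : Fin n, (Hc n j)⁻¹) := by
  classical
  have hsign : ∀ ε, flipMap ε ⁻¹' lorentzBallInf n = lorentzBallInf n := by
    intro ε
    ext x
    simp only [Set.mem_preimage, lorentzBallInf, Set.mem_setOf_eq]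
    have h : lorentzNormInf (flipMap ε x) = lorentzNormInf x := by
      rw [lorentzNormInf_eq_sum_c, lorentzNormInf_eq_sum_c,
        sortedAbs_congr_abs (x := flipMap ε x) (y := x) (fun j => ?_)]
      by_cases h : ε j <;> simp [flipMap, h]
    rw [h]
  have h1 := volume_eq_pow_mul_inter_Qpos measurableSet_lorentzBallInf hsign
  set S := lorentzBallInf n ∩ Qpos n with hSdef
  have hSmeas : MeasurableSet S := measurableSet_lorentzBallInf.inter measurableSet_Qpos
  have hSinv : ∀ σ : Equiv.Perm (Fin n), (fun x : Fin n → ℝ => x ∘ σ) ⁻¹' S = S := by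
    intro σ
    rw [hSdef, Set.preimage_inter]
    congr 1
    · ext x
      simp only [Set.mem_preimage, lorentzBallInf, Set.mem_setOf_eq]
      rw [lorentzNormInf_comp_perm]
    · ext x
      simp only [Set.mem_preimage, Qpos, Set.mem_setOf_eq]
      constructor
      · intro h i
        have := h (σ⁻¹ i)
        simpa [Function.comp] using this
      · intro h i
        exact h (σ i)
  have h2 := volume_eq_factorial_mul_inter_Adec hSmeas hSinv
  have himg := triMap_image (w := fun j => (Hc n j)⁻¹) (d := c n)
      (fun j => inv_pos.mpr (Hc_pos j)) (fun j => by rw [inv_inv]; rfl) ((· ≤ 1))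
  have hset : S ∩ Adec n = triMap (fun j => (Hc n j)⁻¹) ''
      {u | (∀ i, 0 < u i) ∧ ∑ j, u j ≤ 1} := by
    rw [himg]
    ext x
    constructor
    · rintro ⟨⟨hball, hq⟩, hanti⟩
      have hanti' : StrictAnti x := hanti
      have hq' : ∀ i, 0 < x i := hq
      refine ⟨hanti', hq', ?_⟩
      rw [← lorentzNormInf_of_strictAnti hanti' hq']
      exact hball
    · rintro ⟨hanti, hpos, hle⟩
      refine ⟨⟨?_, hpos⟩, hanti⟩
      show lorentzNormInf x ≤ 1
      rw [lorentzNormInf_of_strictAnti hanti hpos]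
      exact hle
  rw [hset, Measure.addHaar_image_linearMap, det_triMap, volume_simplex_le] at h2
  have habs : |∏ j : Fin n, (Hc n j)⁻¹| = ∏ j : Fin n, (Hc n j)⁻¹ :=
    abs_of_pos (Finset.prod_pos fun j _ => inv_pos.mpr (Hc_pos j))
  rw [habs] at h2
  have hfact0 : (n.factorial : ℝ≥0∞) ≠ 0 := Nat.cast_ne_zero.mpr n.factorial_ne_zero
  have hfactt : (n.factorial : ℝ≥0∞) ≠ ⊤ := ENNReal.natCast_ne_top _
  rw [mul_comm (ENNReal.ofReal _) _, ← mul_assoc, ENNReal.mul_inv_cancel hfact0 hfactt,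
    one_mul] at h2
  rw [h1, h2]

/-! ### Asymptotics -/

lemma harmonic_cast_eq (m : ℕ) :
    (harmonic m : ℝ) = ∑ k ∈ range m, ((k : ℝ) + 1)⁻¹ := by
  induction m with
  | zero => simp
  | succ m ih =>
      rw [harmonic_succ, Finset.sum_range_succ, ← ih]
      push_cast
      ring

lemma Hc_eq_harmonic (j : Fin n) : Hc n j = (harmonic ((j : ℕ) + 1) : ℝ) := by
  classical
  rw [harmonic_cast_eq, Hc, Iic_eq_filter, Finset.sum_filter]
  have h1 : ∑ i : Fin n, (if i ≤ j then c n i else 0)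
      = ∑ k ∈ range n, (if k < (j : ℕ) + 1 then ((k : ℝ) + 1)⁻¹ else 0) := by
    rw [← Fin.sum_univ_eq_sum_range (fun k => if k < (j : ℕ) + 1 then ((k : ℝ) + 1)⁻¹ else 0) n]
    refine Finset.sum_congr rfl fun i _ => ?_
    by_cases h : i ≤ j
    · rw [if_pos h, if_pos (by have := Fin.le_def.mp h; omega)]
      rfl
    · rw [if_neg h, if_neg ?_]
      intro hc
      exact h (Fin.le_def.mpr (by omega))
  rw [h1, ← Finset.sum_filter]
  apply Finset.sum_congr
  · ext k
    simp only [Finset.mem_filter, Finset.mem_range]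
    constructor
    · rintro ⟨_, h⟩; exact h
    · intro h
      exact ⟨lt_of_lt_of_le h (by have := j.isLt; omega), h⟩
  · intro k _; rfl

lemma prod_Hc_inv (n : ℕ) :
    ∏ j : Fin n, (Hc n j)⁻¹ = ∏ k ∈ range n, ((harmonic (k+1) : ℝ))⁻¹ := by
  rw [← Fin.prod_univ_eq_prod_range (fun k => ((harmonic (k+1) : ℝ))⁻¹) n]
  exact Finset.prod_congr rfl fun j _ => by rw [Hc_eq_harmonic]

lemma harmonic_real_pos (k : ℕ) : (0:ℝ) < (harmonic (k+1) : ℝ) := by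
  exact_mod_cast harmonic_pos (Nat.succ_ne_zero k)

lemma volume_toReal (n : ℕ) [NeZero n] :
    (volume (lorentzBallInf n)).toReal
      = 2^n * ∏ k ∈ range n, ((harmonic (k+1) : ℝ))⁻¹ := by
  have hnn : (0:ℝ) ≤ ∏ j : Fin n, (Hc n j)⁻¹ :=
    Finset.prod_nonneg fun j _ => (inv_pos.mpr (Hc_pos j)).le
  rw [volume_lorentzBallInf_eq, ENNReal.toReal_mul, ENNReal.toReal_pow,
    ENNReal.toReal_ofNat, ENNReal.toReal_ofReal hnn, prod_Hc_inv]

/-- the partial sums of the logs of harmonic numbers. -/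
def Slog (m : ℕ) : ℝ := ∑ k ∈ range m, Real.log (harmonic (k+1) : ℝ)

lemma tendsto_core :
    Tendsto (fun m : ℕ => Real.log (Real.log m) - Slog m / m) atTop (𝓝 0) := by
  classical
  set f : ℕ → ℝ := fun m => m * Real.log (Real.log m) with hf
  set u : ℕ → ℝ := fun k => Real.log (harmonic (k+1) : ℝ) - (f (k+1) - f k) with hu
  have hsum : ∀ m : ℕ, ∑ k ∈ range m, u k = Slog m - f m := by
    intro m
    rw [hu]
    rw [Finset.sum_sub_distrib, Finset.sum_range_sub f m]
    simp [Slog, hf]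
  have hA : Tendsto (fun k : ℕ => Real.log (harmonic (k+1) : ℝ)
      - Real.log (Real.log ((k+1 : ℕ) : ℝ))) atTop (𝓝 0) := by
    have hlog : Tendsto (fun m : ℕ => Real.log m) atTop atTop :=
      Real.tendsto_log_atTop.comp tendsto_natCast_atTop_atTop
    have h3 : Tendsto (fun m : ℕ => ((harmonic m : ℝ) - Real.log m) / Real.log m)
        atTop (𝓝 0) :=
      Real.tendsto_harmonic_sub_log.div_atTop hlog
    have hratio : Tendsto (fun m : ℕ => (harmonic m : ℝ) / Real.log m) atTop (𝓝 1) := by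
      have h4 : Tendsto (fun m : ℕ => ((harmonic m : ℝ) - Real.log m) / Real.log m + 1)
          atTop (𝓝 (0 + 1)) := h3.add tendsto_const_nhds
      rw [zero_add] at h4
      refine h4.congr' ?_
      filter_upwards [eventually_ge_atTop 2] with m hm
      have hm1 : (1:ℝ) < (m:ℝ) := by exact_mod_cast (by omega : 1 < m)
      have hl : Real.log (m:ℝ) ≠ 0 := (Real.log_pos hm1).ne'
      field_simp
      ring
    have h5 : Tendsto (fun m : ℕ => Real.log ((harmonic m : ℝ) / Real.log m))
        atTop (𝓝 0) := by
      have := (Real.continuousAt_log one_ne_zero).tendsto.comp hratio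
      simpa [Function.comp_def] using this
    have h6 : Tendsto (fun m : ℕ => Real.log (harmonic m : ℝ) - Real.log (Real.log m))
        atTop (𝓝 0) := by
      refine h5.congr' ?_
      filter_upwards [eventually_ge_atTop 2] with m hm
      have hm1 : (1:ℝ) < (m:ℝ) := by exact_mod_cast (by omega : 1 < m)
      have hh : (0:ℝ) < (harmonic m : ℝ) := by
        exact_mod_cast harmonic_pos (by omega)
      have hl : (0:ℝ) < Real.log m := Real.log_pos hm1
      rw [Real.log_div hh.ne' hl.ne']
    exact h6.comp (tendsto_add_atTop_nat 1)
  have hB : Tendsto (fun k : ℕ =>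
      (k:ℝ) * (Real.log (Real.log ((k+1 : ℕ) : ℝ)) - Real.log (Real.log k)))
      atTop (𝓝 0) := by
    have hupper : ∀ᶠ k : ℕ in atTop,
        (k:ℝ) * (Real.log (Real.log ((k+1 : ℕ) : ℝ)) - Real.log (Real.log k))
          ≤ (Real.log (k:ℝ))⁻¹ := by
      filter_upwards [eventually_ge_atTop 3] with k hk
      have hk1 : (1:ℝ) < (k:ℝ) := by exact_mod_cast (by omega : 1 < k)
      have hk0 : (0:ℝ) < (k:ℝ) := by linarith
      set a := Real.log (k:ℝ) with ha
      set b := Real.log ((k:ℝ)+1) with hb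
      have hapos : 0 < a := Real.log_pos hk1
      have hbpos : 0 < b := Real.log_pos (by linarith)
      have hab : a ≤ b := by
        rw [ha, hb]
        exact Real.log_le_log hk0 (by linarith)
      have hcast : (((k+1 : ℕ)) : ℝ) = (k:ℝ) + 1 := by push_cast; ring
      have hdiff : Real.log b - Real.log a ≤ (b - a)/a := by
        rw [show Real.log b - Real.log a = Real.log (b/a) from
          (Real.log_div hbpos.ne' hapos.ne').symm]
        calc Real.log (b/a) ≤ b/a - 1 := Real.log_le_sub_one_of_pos (by positivity)
          _ = (b-a)/a := by field_simp
      have hba : b - a ≤ ((k:ℝ))⁻¹ := by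
        rw [ha, hb, show Real.log ((k:ℝ)+1) - Real.log (k:ℝ)
            = Real.log (((k:ℝ)+1)/(k:ℝ)) from
          (Real.log_div (by linarith) (by linarith)).symm]
        calc Real.log (((k:ℝ)+1)/(k:ℝ)) ≤ ((k:ℝ)+1)/(k:ℝ) - 1 :=
              Real.log_le_sub_one_of_pos (by positivity)
          _ = (k:ℝ)⁻¹ := by field_simp; ring
      calc (k:ℝ) * (Real.log (Real.log ((k+1:ℕ) : ℝ)) - Real.log (Real.log (k:ℝ)))
          = (k:ℝ) * (Real.log b - Real.log a) := by rw [hcast, ← hb, ← ha]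
        _ ≤ (k:ℝ) * ((b-a)/a) := mul_le_mul_of_nonneg_left hdiff hk0.le
        _ ≤ (k:ℝ) * ((k:ℝ)⁻¹/a) :=
            mul_le_mul_of_nonneg_left ((div_le_div_iff_of_pos_right hapos).mpr hba) hk0.le
        _ = a⁻¹ := by
            field_simp
    have hlower : ∀ᶠ k : ℕ in atTop,
        (0:ℝ) ≤ (k:ℝ) * (Real.log (Real.log ((k+1:ℕ) : ℝ)) - Real.log (Real.log k)) := by
      filter_upwards [eventually_ge_atTop 3] with k hk
      have hk1 : (1:ℝ) < (k:ℝ) := by exact_mod_cast (by omega : 1 < k)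
      have hmono : Real.log (Real.log (k:ℝ)) ≤ Real.log (Real.log ((k+1:ℕ) : ℝ)) := by
        apply Real.log_le_log (Real.log_pos hk1)
        apply Real.log_le_log (by linarith)
        push_cast
        linarith
      have hknn : (0:ℝ) ≤ (k:ℝ) := by positivity
      exact mul_nonneg hknn (by linarith)
    have hzero : Tendsto (fun k : ℕ => (Real.log (k:ℝ))⁻¹) atTop (𝓝 0) :=
      (Real.tendsto_log_atTop.comp tendsto_natCast_atTop_atTop).inv_tendsto_atTop
    exact tendsto_of_tendsto_of_tendsto_of_le_of_le' tendsto_const_nhds hzero hlower hupper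
  have huzero : Tendsto u atTop (𝓝 0) := by
    have h := hA.sub hB
    rw [sub_zero] at h
    refine h.congr fun k => ?_
    rw [hu, hf]
    push_cast
    ring
  have hces := huzero.cesaro
  have hneg : Tendsto (fun m : ℕ => -((m:ℝ)⁻¹ * ∑ k ∈ range m, u k)) atTop (𝓝 (-0)) :=
    hces.neg
  rw [neg_zero] at hneg
  refine hneg.congr' ?_
  filter_upwards [eventually_ge_atTop 1] with m hm
  have hm0 : (m:ℝ) ≠ 0 := Nat.cast_ne_zero.mpr (by omega)
  rw [hsum m, hf]
  field_simp
  ring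

lemma eventual_eq (m : ℕ) (hm : 3 ≤ m) :
    Real.log m * (volume (lorentzBallInf m)).toReal ^ ((m : ℝ)⁻¹)
      = 2 * Real.exp (Real.log (Real.log m) - Slog m / m) := by
  haveI : NeZero m := ⟨by omega⟩
  have hharm : ∀ k ∈ range m, ((harmonic (k+1) : ℝ))⁻¹ ≠ 0 := fun k _ =>
    inv_ne_zero (harmonic_real_pos k).ne'
  have hprodpos : (0:ℝ) < ∏ k ∈ range m, ((harmonic (k+1) : ℝ))⁻¹ :=
    Finset.prod_pos fun k _ => inv_pos.mpr (harmonic_real_pos k)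
  have hR : (volume (lorentzBallInf m)).toReal
      = 2^m * ∏ k ∈ range m, ((harmonic (k+1) : ℝ))⁻¹ := volume_toReal m
  have hRpos : (0:ℝ) < (volume (lorentzBallInf m)).toReal := by
    rw [hR]; positivity
  have hm1 : (1:ℝ) < (m:ℝ) := by exact_mod_cast (by omega : 1 < m)
  have hlogm : (0:ℝ) < Real.log m := Real.log_pos hm1
  rw [Real.rpow_def_of_pos hRpos]
  have hlogR : Real.log ((volume (lorentzBallInf m)).toReal)
      = m * Real.log 2 - Slog m := by
    rw [hR, Real.log_mul (by positivity) hprodpos.ne', Real.log_pow,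
      Real.log_prod hharm]
    simp only [Real.log_inv, Slog]
    rw [Finset.sum_neg_distrib]
    ring
  rw [hlogR]
  have hm0 : (m:ℝ) ≠ 0 := by positivity
  have harith : ((m:ℝ) * Real.log 2 - Slog m) * (m:ℝ)⁻¹
      = Real.log 2 - Slog m / m := by
    field_simp
  rw [harith]
  conv_lhs => rw [← Real.exp_log hlogm]
  rw [← Real.exp_add, show Real.log (Real.log (m:ℝ)) + (Real.log 2 - Slog m / (m:ℝ))
      = Real.log 2 + (Real.log (Real.log (m:ℝ)) - Slog m / (m:ℝ)) from by ring,
    Real.exp_add, Real.exp_log two_pos]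

end LorentzVol

/-- For `q = ∞`, the volume radius satisfies
`(log n) vol_n(B_{∞,1}^n)^{1/n} → 2` as `n → ∞`. -/
theorem volume_radius_lorentzBallInf :
    Tendsto (fun n : ℕ =>
        Real.log n * (volume (lorentzBallInf n)).toReal ^ ((n : ℝ)⁻¹))
      atTop (nhds 2) := by
  have hexp : Tendsto (fun m : ℕ =>
      2 * Real.exp (Real.log (Real.log m) - LorentzVol.Slog m / m)) atTop (nhds 2) := by
    have h := (Real.continuous_exp.tendsto 0).comp LorentzVol.tendsto_core
    have h2 := h.const_mul (2:ℝ)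
    simpa using h2
  refine Tendsto.congr' ?_ hexp
  filter_upwards [eventually_ge_atTop 3] with m hm
  exact (LorentzVol.eventual_eq m hm).symm

end
end

section
/- Let 1 < q ≤ ∞ and n ∈ ℕ, and let W = {x ∈ ℝ^n : x_1 ≥ x_2 ≥ ⋯ ≥ x_n ≥ 0} be the Weyl chamber. Then B_{q,1}^n ∩ W is the convex hull of the n+1 points 0, Me_1, …, Me_n, where M is the upper triangular n×n matrix whose (i,j) entry equals κ_q(j)^{-1} for i ≤ j and 0 for i > j, and e_1,…,e_n are the standard unit vectors. Equivalently, B_{q,1}^n ∩ W = M(conv{0, e_1, …, e_n}), and 0, Me_1, …, Me_n are exactly the extreme points of B_{q,1}^n ∩ W. -/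
open MeasureTheory Finset
open scoped ENNReal NNReal

noncomputable section

/-- The Weyl chamber `W = {x : x_1 ≥ x_2 ≥ ⋯ ≥ x_n ≥ 0}`. -/
def weylChamber (n : ℕ) : Set (Fin n → ℝ) :=
  {x | (∀ i j : Fin n, i ≤ j → x j ≤ x i) ∧ ∀ i, 0 ≤ x i}

/-- `Mcol q j = M e_j`: the `j`-th column of the matrix `M`, whose `i`-th entry is
`κ_q(j)⁻¹` for `i ≤ j` and `0` otherwise. -/
def Mcol (q : ℝ≥0∞) {n : ℕ} (j : Fin n) : Fin n → ℝ :=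
  fun i => if (i : ℕ) ≤ (j : ℕ) then (kappa q ((j : ℕ) + 1))⁻¹ else 0

namespace LorentzAux

variable (q : ℝ≥0∞) {n : ℕ}

lemma weight_pos (i : ℕ) : 0 < lorentzWeight q (i + 1) := by
  unfold lorentzWeight
  apply Real.rpow_pos_of_pos
  positivity

lemma kappa_pos (j : ℕ) : 0 < kappa q (j + 1) := by
  unfold kappa
  apply Finset.sum_pos (fun i _ => weight_pos q i)
  exact ⟨0, Finset.mem_range.mpr (Nat.succ_pos j)⟩

lemma kappa_succ (j : ℕ) : kappa q (j + 1) = kappa q j + lorentzWeight q (j + 1) :=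
  Finset.sum_range_succ _ j

/-- extension of `x` by zero to `ℕ`. -/
def Xe (x : Fin n → ℝ) (k : ℕ) : ℝ := if h : k < n then x ⟨k, h⟩ else 0

lemma Xe_coe (x : Fin n → ℝ) (i : Fin n) : Xe x (i : ℕ) = x i := by
  simp [Xe, i.isLt]

lemma Xe_of_le (x : Fin n → ℝ) {k : ℕ} (h : n ≤ k) : Xe x k = 0 := dif_neg (not_lt.mpr h)

lemma Xe_smul_add (a b : ℝ) (x y : Fin n → ℝ) (k : ℕ) :
    Xe (a • x + b • y) k = a * Xe x k + b * Xe y k := by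
  unfold Xe
  split
  · simp
  · ring

lemma Xe_nonneg {x : Fin n → ℝ} (hx : x ∈ weylChamber n) (k : ℕ) : 0 ≤ Xe x k := by
  unfold Xe; split
  · exact hx.2 _
  · exact le_rfl

lemma Xe_step {x : Fin n → ℝ} (hx : x ∈ weylChamber n) (k : ℕ) : Xe x (k + 1) ≤ Xe x k := by
  unfold Xe
  by_cases h1 : k + 1 < n
  · have hk : k < n := by omega
    rw [dif_pos h1, dif_pos hk]
    exact hx.1 ⟨k, hk⟩ ⟨k + 1, h1⟩ (by simp)
  · rw [dif_neg h1]
    split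
    · exact hx.2 _
    · exact le_rfl

/-- the coefficient map. -/
def Cf (x : Fin n → ℝ) (k : ℕ) : ℝ := kappa q (k + 1) * (Xe x k - Xe x (k + 1))

lemma Cf_nonneg {x : Fin n → ℝ} (hx : x ∈ weylChamber n) (k : ℕ) : 0 ≤ Cf q x k :=
  mul_nonneg (kappa_pos q k).le (sub_nonneg.mpr (Xe_step hx k))

lemma Cf_smul_add (a b : ℝ) (x y : Fin n → ℝ) (k : ℕ) :
    Cf q (a • x + b • y) k = a * Cf q x k + b * Cf q y k := by
  unfold Cf
  rw [Xe_smul_add, Xe_smul_add]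
  ring

lemma sum_Cf (x : Fin n → ℝ) :
    ∑ k ∈ Finset.range n, Cf q x k
      = ∑ k ∈ Finset.range n, lorentzWeight q (k + 1) * Xe x k := by
  have h1 : ∀ k, Cf q x k = kappa q (k + 1) * Xe x k - kappa q k * Xe x k
      - (kappa q (k + 1) * Xe x (k + 1) - kappa q k * Xe x k) := fun k => by
    unfold Cf; ring
  simp_rw [h1]
  rw [Finset.sum_sub_distrib]
  have h2 : ∑ k ∈ Finset.range n, (kappa q (k + 1) * Xe x (k + 1) - kappa q k * Xe x k) = 0 := by
    rw [Finset.sum_range_sub (fun k => kappa q k * Xe x k) n]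
    rcases Nat.eq_zero_or_pos n with rfl | hn
    · simp [kappa]
    · rw [Xe_of_le x le_rfl]
      simp [kappa]
  rw [h2, sub_zero]
  refine Finset.sum_congr rfl fun k _ => ?_
  rw [kappa_succ]
  ring

lemma reconstruct (x : Fin n → ℝ) {i : ℕ} (hi : i ≤ n) :
    Xe x i = ∑ k ∈ Finset.Ico i n, Cf q x k / kappa q (k + 1) := by
  have hterm : ∀ k, Cf q x k / kappa q (k + 1) = Xe x k - Xe x (k + 1) := fun k => by
    unfold Cf
    exact mul_div_cancel_left₀ _ (kappa_pos q k).ne'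
  simp_rw [hterm]
  rw [Finset.sum_Ico_eq_sum_range]
  have hcalc := Finset.sum_range_sub' (fun k => Xe x (i + k)) (n - i)
  simp only [← Nat.add_assoc] at hcalc
  rw [hcalc, Nat.add_zero, Nat.add_sub_cancel' hi, Xe_of_le x le_rfl, sub_zero]

lemma Xe_Mcol (j : Fin n) (k : ℕ) :
    Xe (Mcol q j) k = if k ≤ (j : ℕ) then (kappa q ((j : ℕ) + 1))⁻¹ else 0 := by
  unfold Xe Mcol
  split
  · rfl
  · rw [if_neg (by omega : ¬ k ≤ (j : ℕ))]

lemma Cf_Mcol (j : Fin n) (k : ℕ) :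
    Cf q (Mcol q j) k = if k = (j : ℕ) then 1 else 0 := by
  unfold Cf
  rw [Xe_Mcol, Xe_Mcol]
  rcases lt_trichotomy k (j : ℕ) with h | h | h
  · rw [if_pos h.le, if_pos (by omega : k + 1 ≤ (j : ℕ)), if_neg (by omega)]
    ring
  · rw [if_pos h.le, if_neg (by omega), if_pos h, sub_zero]
    subst h
    exact mul_inv_cancel₀ (kappa_pos q _).ne'
  · rw [if_neg (by omega), if_neg (by omega), if_neg (by omega)]
    ring

lemma Mcol_mem_weyl (j : Fin n) : Mcol q j ∈ weylChamber n := by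
  constructor
  · intro a b hab
    unfold Mcol
    by_cases hb : (b : ℕ) ≤ (j : ℕ)
    · rw [if_pos hb, if_pos (le_trans (Fin.le_iff_val_le_val.mp hab) hb)]
    · rw [if_neg hb]
      split
      · exact inv_nonneg.mpr (kappa_pos q _).le
      · exact le_rfl
  · intro i
    unfold Mcol
    split
    · exact inv_nonneg.mpr (kappa_pos q _).le
    · exact le_rfl

lemma sortedAbs_eq {x : Fin n → ℝ} (hx : x ∈ weylChamber n) (i : Fin n) :
    sortedAbs x i = x i := by
  set f : Fin n → ℝ := fun j => |x j| with hf
  have habs : ∀ j, f j = x j := fun j => abs_of_nonneg (hx.2 j)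
  have hmono : Monotone (f ∘ (Fin.revPerm : Equiv.Perm (Fin n))) := by
    intro a b hab
    simp only [Function.comp_apply, Fin.revPerm_apply, habs]
    exact hx.1 b.rev a.rev (Fin.rev_le_rev.mpr hab)
  have hkey : f ∘ (Fin.revPerm : Equiv.Perm (Fin n)) = f ∘ Tuple.sort f :=
    Tuple.comp_sort_eq_comp_iff_monotone.mpr hmono
  have h2 := congrFun hkey i.rev
  simp only [Function.comp_apply, Fin.revPerm_apply, Fin.rev_rev] at h2
  unfold sortedAbs
  rw [← hf] at *
  rw [show |x (Tuple.sort f i.rev)| = f (Tuple.sort f i.rev) from rfl, ← h2, habs]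

lemma lorentzNorm_eq {x : Fin n → ℝ} (hx : x ∈ weylChamber n) :
    lorentzNorm q x = ∑ k ∈ Finset.range n, lorentzWeight q (k + 1) * Xe x k := by
  unfold lorentzNorm
  rw [← Fin.sum_univ_eq_sum_range (fun k => lorentzWeight q (k + 1) * Xe x k) n]
  refine Finset.sum_congr rfl fun i _ => ?_
  rw [sortedAbs_eq hx, Xe_coe]

lemma mem_iff (x : Fin n → ℝ) :
    x ∈ lorentzBall q n ∩ weylChamber n
      ↔ x ∈ weylChamber n ∧ ∑ k ∈ Finset.range n, Cf q x k ≤ 1 := by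
  constructor
  · rintro ⟨hb, hw⟩
    refine ⟨hw, ?_⟩
    rw [sum_Cf, ← lorentzNorm_eq q hw]
    exact hb
  · rintro ⟨hw, hs⟩
    refine ⟨?_, hw⟩
    show lorentzNorm q x ≤ 1
    rw [lorentzNorm_eq q hw, ← sum_Cf]
    exact hs

end LorentzAux

open LorentzAux

/-- The intersection of the Lorentz ball `B_{q,1}^n` with the Weyl chamber is the
convex hull of `0, M e_1, …, M e_n`, and these `n+1` points are exactly its extreme
points. -/
theorem lorentzBall_inter_weylChamber (q : ℝ≥0∞) (hq : 1 < q) (n : ℕ) :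
    lorentzBall q n ∩ weylChamber n
        = convexHull ℝ (insert 0 (Set.range (Mcol q (n := n))))
      ∧ Set.extremePoints ℝ (lorentzBall q n ∩ weylChamber n)
        = insert 0 (Set.range (Mcol q (n := n))) := by
  classical
  have hFS : insert 0 (Set.range (Mcol q (n := n))) ⊆ lorentzBall q n ∩ weylChamber n := by
    intro p hp
    rw [mem_iff]
    rcases Set.mem_insert_iff.mp hp with rfl | ⟨j, rfl⟩
    · refine ⟨⟨fun i j _ => le_rfl, fun i => le_rfl⟩, ?_⟩
      have hc : ∀ k, Cf q (0 : Fin n → ℝ) k = 0 := fun k => by simp [Cf, Xe]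
      simp [hc]
    · refine ⟨Mcol_mem_weyl q j, ?_⟩
      rw [Finset.sum_congr rfl fun k _ => Cf_Mcol q j k,
        Finset.sum_ite_eq' (Finset.range n) ((j : ℕ)) (fun _ => (1 : ℝ))]
      simp [j.isLt]
  have hconv : Convex ℝ (lorentzBall q n ∩ weylChamber n) := by
    intro x hx y hy a b ha hb hab
    rw [mem_iff] at hx hy ⊢
    obtain ⟨hxW, hxs⟩ := hx
    obtain ⟨hyW, hys⟩ := hy
    have hW : a • x + b • y ∈ weylChamber n := by
      constructor
      · intro i j hij
        simp only [Pi.add_apply, Pi.smul_apply, smul_eq_mul]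
        have h1 := hxW.1 i j hij
        have h2 := hyW.1 i j hij
        nlinarith
      · intro i
        simp only [Pi.add_apply, Pi.smul_apply, smul_eq_mul]
        have h1 := hxW.2 i
        have h2 := hyW.2 i
        nlinarith
    refine ⟨hW, ?_⟩
    calc ∑ k ∈ Finset.range n, Cf q (a • x + b • y) k
        = a * ∑ k ∈ Finset.range n, Cf q x k + b * ∑ k ∈ Finset.range n, Cf q y k := by
          rw [Finset.mul_sum, Finset.mul_sum, ← Finset.sum_add_distrib]
          exact Finset.sum_congr rfl fun k _ => Cf_smul_add q a b x y k
      _ ≤ 1 := by nlinarith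
  have heq : lorentzBall q n ∩ weylChamber n
      = convexHull ℝ (insert 0 (Set.range (Mcol q (n := n)))) := by
    apply Set.Subset.antisymm
    · intro x hx
      obtain ⟨hW, hsum⟩ := (mem_iff q x).1 hx
      set Wc : Fin (n + 1) → ℝ :=
        Fin.cons (1 - ∑ k ∈ Finset.range n, Cf q x k) (fun k : Fin n => Cf q x (k : ℕ)) with hWc
      set Zc : Fin (n + 1) → (Fin n → ℝ) := Fin.cons 0 (fun k => Mcol q k) with hZc
      have hxrep : x = ∑ i : Fin (n + 1), Wc i • Zc i := by
        rw [Fin.sum_univ_succ]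
        simp only [hWc, hZc, Fin.cons_zero, Fin.cons_succ, smul_zero, zero_add]
        funext i
        simp only [Finset.sum_apply, Pi.smul_apply, smul_eq_mul]
        have h1 : ∀ k : Fin n, Cf q x (k : ℕ) * Mcol q k i
            = (fun m => if (i : ℕ) ≤ m then Cf q x m * (kappa q (m + 1))⁻¹ else 0) (k : ℕ) := by
          intro k
          unfold Mcol
          dsimp only
          split <;> simp
        rw [Finset.sum_congr rfl fun k _ => h1 k,
          Fin.sum_univ_eq_sum_range
            (fun m => if (i : ℕ) ≤ m then Cf q x m * (kappa q (m + 1))⁻¹ else 0) n,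
          ← Finset.sum_filter]
        have hfilt : (Finset.range n).filter (fun m => (i : ℕ) ≤ m) = Finset.Ico (i : ℕ) n := by
          ext m
          simp only [Finset.mem_filter, Finset.mem_range, Finset.mem_Ico]
          omega
        rw [hfilt]
        have hrec := reconstruct q x (le_of_lt i.isLt)
        rw [Xe_coe] at hrec
        simp_rw [div_eq_mul_inv] at hrec
        exact hrec
      have hWnn : ∀ i₀ ∈ Finset.univ (α := Fin (n + 1)), 0 ≤ Wc i₀ := by
        intro i₀ _
        induction i₀ using Fin.cases with
        | zero => simpa [hWc] using sub_nonneg.mpr hsum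
        | succ k => simp only [hWc, Fin.cons_succ]; exact Cf_nonneg q hW _
      have hWs : ∑ i₀ : Fin (n + 1), Wc i₀ = 1 := by
        rw [Fin.sum_univ_succ]
        simp only [hWc, Fin.cons_zero, Fin.cons_succ]
        rw [Fin.sum_univ_eq_sum_range (fun m => Cf q x m) n]
        ring
      have hZF : ∀ i₀ ∈ Finset.univ (α := Fin (n + 1)),
          Zc i₀ ∈ convexHull ℝ (insert 0 (Set.range (Mcol q (n := n)))) := by
        intro i₀ _
        apply subset_convexHull
        induction i₀ using Fin.cases with
        | zero => simp only [hZc, Fin.cons_zero]; exact Set.mem_insert _ _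
        | succ k =>
          simp only [hZc, Fin.cons_succ]
          exact Set.mem_insert_iff.mpr (Or.inr ⟨k, rfl⟩)
      rw [hxrep]
      exact (convex_convexHull ℝ _).sum_mem hWnn hWs hZF
    · exact convexHull_min hFS hconv
  refine ⟨heq, ?_⟩
  apply Set.Subset.antisymm
  · rw [heq]
    exact extremePoints_convexHull_subset
  · intro p hp
    rw [mem_extremePoints]
    refine ⟨hFS hp, ?_⟩
    rcases Set.mem_insert_iff.mp hp with rfl | ⟨j, rfl⟩
    · rintro x₁ hx₁ x₂ hx₂ ⟨a, b, ha, hb, hab, habs⟩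
      have h1 : ∀ i, x₁ i = 0 ∧ x₂ i = 0 := by
        intro i
        have he := congrFun habs i
        simp only [Pi.add_apply, Pi.smul_apply, smul_eq_mul, Pi.zero_apply] at he
        have n1 : 0 ≤ x₁ i := hx₁.2.2 i
        have n2 : 0 ≤ x₂ i := hx₂.2.2 i
        constructor <;> nlinarith
      exact ⟨funext fun i => (h1 i).1, funext fun i => (h1 i).2⟩
    · rintro x₁ hx₁ x₂ hx₂ ⟨a, b, ha, hb, hab, habs⟩
      obtain ⟨hW1, hs1⟩ := (mem_iff q x₁).1 hx₁
      obtain ⟨hW2, hs2⟩ := (mem_iff q x₂).1 hx₂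
      have hCeq : ∀ k, a * Cf q x₁ k + b * Cf q x₂ k = if k = (j : ℕ) then 1 else 0 := by
        intro k
        rw [← Cf_smul_add, habs, Cf_Mcol]
      have hzero : ∀ k, k ≠ (j : ℕ) → Cf q x₁ k = 0 ∧ Cf q x₂ k = 0 := by
        intro k hk
        have h := hCeq k
        rw [if_neg hk] at h
        have n1 := Cf_nonneg q hW1 k
        have n2 := Cf_nonneg q hW2 k
        constructor <;> nlinarith
      have htot : a * (∑ k ∈ Finset.range n, Cf q x₁ k)
          + b * (∑ k ∈ Finset.range n, Cf q x₂ k) = 1 := by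
        rw [Finset.mul_sum, Finset.mul_sum, ← Finset.sum_add_distrib,
          Finset.sum_congr rfl fun k _ => hCeq k,
          Finset.sum_ite_eq' (Finset.range n) ((j : ℕ)) (fun _ => (1 : ℝ))]
        simp [j.isLt]
      have key : ∀ y : Fin n → ℝ, y ∈ weylChamber n →
          (∑ k ∈ Finset.range n, Cf q y k = 1) → (∀ k, k ≠ (j : ℕ) → Cf q y k = 0) →
          y = Mcol q j := by
        intro y hWy hsy hzy
        have hCj : Cf q y (j : ℕ) = 1 := by
          rw [← hsy]
          exact (Finset.sum_eq_single_of_mem (j : ℕ) (Finset.mem_range.mpr j.isLt)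
            (fun k _ hk => hzy k hk)).symm
        funext i
        have hrec := reconstruct q y (le_of_lt i.isLt)
        rw [Xe_coe] at hrec
        rw [hrec]
        have hterm : ∀ k, Cf q y k / kappa q (k + 1)
            = if k = (j : ℕ) then (kappa q ((j : ℕ) + 1))⁻¹ else 0 := by
          intro k
          by_cases hk : k = (j : ℕ)
          · subst hk
            rw [if_pos rfl, hCj, one_div]
          · rw [if_neg hk, hzy k hk, zero_div]
        rw [Finset.sum_congr rfl fun k _ => hterm k,
          Finset.sum_ite_eq' (Finset.Ico (i : ℕ) n) ((j : ℕ))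
            (fun _ => (kappa q ((j : ℕ) + 1))⁻¹)]
        unfold Mcol
        by_cases hij : (i : ℕ) ≤ (j : ℕ) <;>
          simp [hij, Finset.mem_Ico, j.isLt]
      have hsum1 : ∑ k ∈ Finset.range n, Cf q x₁ k = 1 := by
        nlinarith [mul_nonneg ha.le (sub_nonneg.mpr hs1), mul_nonneg hb.le (sub_nonneg.mpr hs2)]
      have hsum2 : ∑ k ∈ Finset.range n, Cf q x₂ k = 1 := by
        nlinarith [mul_nonneg ha.le (sub_nonneg.mpr hs1), mul_nonneg hb.le (sub_nonneg.mpr hs2)]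
      exact ⟨key x₁ hW1 hsum1 (fun k hk => (hzero k hk).1),
        key x₂ hW2 hsum2 (fun k hk => (hzero k hk).2)⟩


end
end
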